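/- arXiv:1703.08153 — 6 statements merged into one kernel-verified Lean document; each statement's English description precedes it below -/
import Mathlib

section
/- Let d̂ := rank(V_o), let S₂ ∈ ℝ^{d×(d−d̂)} have columns forming a basis of the null space of V_o, let S = [S₁ S₂] ∈ ℝ^{d×d} be nonsingular, and write T := S⁻¹ = col(T₁, T₂) with T₁ ∈ ℝ^{d̂×d}. Set A₁₁ := T₁AS₁ ∈ ℝ^{d̂×d̂}, B₁ := T₁B, C₁ := CS₁ (so that, as holds automatically, T₁AS₂ = 0 and CS₂ = 0). Suppose E₊^σ(x₀) is bounded above for every x₀ ∈ ℝ^d. Then, for the reduced system with matrices (A₁₁, B₁, C₁, D) and the same supply rate σ, Ê₊^σ(x̂₀) is bounded above for every x̂₀ ∈ ℝ^{d̂}, and S_a^σ(x₀) = Ŝ_a^σ(T₁x₀) for every x₀ ∈ ℝ^d; in particular, S_a^σ(z) = 0 for every z ∈ ℝ^d with V_o z = 0. -/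
open MeasureTheory Matrix Polynomial
open scoped ComplexOrder

noncomputable section

/-- real matrices of the indicated size -/
abbrev Mat (m n : ℕ) := Matrix (Fin m) (Fin n) ℝ

/-- A function `u : ℝ → ℝⁿ` is locally square-integrable if it is Lebesgue measurable and
the integral of its square over every compact set is finite. -/
def LocL2 {n : ℕ} (u : ℝ → Fin n → ℝ) : Prop :=
  Measurable u ∧ ∀ K : Set ℝ, IsCompact K → ∀ i : Fin n,
    (∫⁻ t in K, ENNReal.ofReal ((u t i) ^ 2)) < ⊤

/-- the state trajectory `x(t) = e^{A(t−t₀)}x₀ + ∫_{t₀}^{t} e^{A(t−τ)}Bu(τ)dτ` -/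
def stateSol {d n : ℕ} (A : Mat d d) (B : Mat d n) (t₀ : ℝ) (x₀ : Fin d → ℝ)
    (u : ℝ → Fin n → ℝ) (t : ℝ) : Fin d → ℝ :=
  NormedSpace.exp ((t - t₀) • A) *ᵥ x₀ +
    ∫ τ in t₀..t, NormedSpace.exp ((t - τ) • A) *ᵥ (B *ᵥ u τ)

/-- the output trajectory `y(t) = Cx(t) + Du(t)` -/
def outputSol {d n m : ℕ} (A : Mat d d) (B : Mat d n) (C : Matrix (Fin m) (Fin d) ℝ)
    (D : Matrix (Fin m) (Fin n) ℝ) (t₀ : ℝ) (x₀ : Fin d → ℝ) (u : ℝ → Fin n → ℝ)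
    (t : ℝ) : Fin m → ℝ :=
  C *ᵥ stateSol A B t₀ x₀ u t + D *ᵥ u t

/-- the observability matrix col(C, CA, …, CA^{d−1}) -/
def obsMat {d m : ℕ} (A : Mat d d) (C : Matrix (Fin m) (Fin d) ℝ) :
    Matrix (Fin d × Fin m) (Fin d) ℝ :=
  Matrix.of fun p j => (C * A ^ (p.1 : ℕ)) p.2 j

/-- the quadratic supply rate `σ(u,y) = uᵀΣ₁₁u + 2uᵀΣ₁₂y + yᵀΣ₂₂y` -/
def supplyRate {n m : ℕ} (S11 : Mat n n) (S12 : Matrix (Fin n) (Fin m) ℝ) (S22 : Mat m m)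
    (u : Fin n → ℝ) (y : Fin m → ℝ) : ℝ :=
  u ⬝ᵥ (S11 *ᵥ u) + 2 * (u ⬝ᵥ (S12 *ᵥ y)) + y ⬝ᵥ (S22 *ᵥ y)

/-- the set of extractable values of `∫ −σ(u,y)` from initial state `x₀` -/
def sigmaEnergySet {d n m : ℕ} (A : Mat d d) (B : Mat d n) (C : Matrix (Fin m) (Fin d) ℝ)
    (D : Matrix (Fin m) (Fin n) ℝ) (S11 : Mat n n) (S12 : Matrix (Fin n) (Fin m) ℝ)
    (S22 : Mat m m) (x₀ : Fin d → ℝ) : Set ℝ :=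
  { e | ∃ (t₀ t₁ : ℝ) (u : ℝ → Fin n → ℝ), t₀ ≤ t₁ ∧ LocL2 u ∧
      e = ∫ t in t₀..t₁,
        -(supplyRate S11 S12 S22 (u t) (outputSol A B C D t₀ x₀ u t)) }

/-!
The unobservable subspace `V = ker V_o` is spanned by the columns of `S₂`; by Cayley–Hamilton
it is `A`-invariant and contained in `ker C`. Since `x - S₁T₁x = S₂T₂x ∈ V`, this gives
`T₁A = A₁₁T₁` and `C = C₁T₁`, so `T₁` maps the trajectory of the full system from `x₀` to the
trajectory of the reduced system from `T₁x₀` with the same input and the same output: the two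
energy sets coincide. From the zero state the output is linear in the input, so the energy set
is closed under multiplication by `r ≥ 0`; being bounded above and containing `0`, it has
supremum `0`. Finally `T₁z = 0` for `z ∈ V`.
-/

section Observability

variable {d m : ℕ} {A : Mat d d} {C : Matrix (Fin m) (Fin d) ℝ}

theorem obsMat_mulVec_eq_zero_iff {z : Fin d → ℝ} :
    obsMat A C *ᵥ z = 0 ↔ ∀ k : ℕ, (C * A ^ k) *ᵥ z = 0 := by
  constructor
  · intro hz k
    have hlow : ∀ i < d, (C * A ^ i) *ᵥ z = 0 := fun i hi => funext fun j => by
      simpa [obsMat, mulVec, dotProduct] using congrFun hz (⟨i, hi⟩, j)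
    rcases Nat.eq_zero_or_pos d with rfl | hd
    · simp [Subsingleton.elim z 0]
    -- Cayley–Hamilton: `A ^ k` is a linear combination of `A ^ i` with `i < d`
    have hdeg : (X ^ k %ₘ A.charpoly).natDegree < d := by
      have hne : A.charpoly ≠ 1 := fun h => by
        have := charpoly_natDegree_eq_dim A
        simp [h] at this
        omega
      simpa using natDegree_modByMonic_lt (X ^ k) (charpoly_monic A) hne
    rw [pow_eq_aeval_mod_charpoly, aeval_eq_sum_range' hdeg, Matrix.mul_sum, Matrix.sum_mulVec]
    refine Finset.sum_eq_zero fun i hi => ?_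
    rw [Matrix.mul_smul, smul_mulVec, hlow i (Finset.mem_range.1 hi), smul_zero]
  · intro h
    funext ⟨i, j⟩
    simpa [obsMat, mulVec, dotProduct] using congrFun (h i) j

theorem obsMat_mulVec_mulVec_eq_zero {z : Fin d → ℝ} (hz : obsMat A C *ᵥ z = 0) :
    obsMat A C *ᵥ (A *ᵥ z) = 0 := by
  rw [obsMat_mulVec_eq_zero_iff] at hz ⊢
  intro k
  rw [mulVec_mulVec, Matrix.mul_assoc, ← pow_succ]
  exact hz (k + 1)

theorem mulVec_eq_zero_of_obsMat_mulVec_eq_zero {z : Fin d → ℝ} (hz : obsMat A C *ᵥ z = 0) :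
    C *ᵥ z = 0 := by
  simpa using obsMat_mulVec_eq_zero_iff.1 hz 0

def SpansUnobservable {ι : Type*} [Fintype ι] (A : Mat d d) (C : Matrix (Fin m) (Fin d) ℝ)
    (S2 : Matrix (Fin d) ι ℝ) : Prop :=
  ∀ z : Fin d → ℝ, obsMat A C *ᵥ z = 0 ↔ ∃ c : ι → ℝ, z = S2 *ᵥ c

variable {dh : ℕ} {ι : Type*} [Fintype ι] {S1 : Matrix (Fin d) (Fin dh) ℝ}
  {S2 : Matrix (Fin d) ι ℝ} {T1 : Matrix (Fin dh) (Fin d) ℝ} {T2 : Matrix ι (Fin d) ℝ}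

theorem SpansUnobservable.mulVec_eq_zero (hbasis : SpansUnobservable A C S2)
    (hT1S2 : T1 * S2 = 0) {z : Fin d → ℝ} (hz : obsMat A C *ᵥ z = 0) : T1 *ᵥ z = 0 := by
  obtain ⟨c, rfl⟩ := (hbasis z).1 hz
  rw [mulVec_mulVec, hT1S2, zero_mulVec]

theorem SpansUnobservable.obsMat_mulVec_sub_eq_zero (hbasis : SpansUnobservable A C S2)
    (hST : S1 * T1 + S2 * T2 = 1) (x : Fin d → ℝ) :
    obsMat A C *ᵥ (x - S1 *ᵥ (T1 *ᵥ x)) = 0 :=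
  (hbasis _).2 ⟨T2 *ᵥ x, by
    rw [sub_eq_iff_eq_add', mulVec_mulVec, mulVec_mulVec, ← add_mulVec, hST, one_mulVec]⟩

theorem SpansUnobservable.mul_eq_mul_mul (hbasis : SpansUnobservable A C S2)
    (hT1S2 : T1 * S2 = 0) (hST : S1 * T1 + S2 * T2 = 1) :
    T1 * A = T1 * A * S1 * T1 := by
  refine ext_iff_mulVec.2 fun x => ?_
  have h := hbasis.mulVec_eq_zero hT1S2
    (obsMat_mulVec_mulVec_eq_zero (hbasis.obsMat_mulVec_sub_eq_zero hST x))
  rw [mulVec_sub, mulVec_sub, sub_eq_zero] at h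
  simpa only [mulVec_mulVec, Matrix.mul_assoc] using h

theorem SpansUnobservable.eq_mul_mul (hbasis : SpansUnobservable A C S2)
    (hST : S1 * T1 + S2 * T2 = 1) : C = C * S1 * T1 := by
  refine ext_iff_mulVec.2 fun x => ?_
  have h := mulVec_eq_zero_of_obsMat_mulVec_eq_zero (hbasis.obsMat_mulVec_sub_eq_zero hST x)
  rw [mulVec_sub, sub_eq_zero] at h
  simpa only [mulVec_mulVec, Matrix.mul_assoc] using h

end Observability

theorem LocL2.integrableOn_uIcc {n : ℕ} {u : ℝ → Fin n → ℝ} (hu : LocL2 u) (a b : ℝ)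
    (i : Fin n) : IntegrableOn (fun t => u t i) (Set.uIcc a b) := by
  have : IsFiniteMeasure (volume.restrict (Set.uIcc a b)) :=
    isFiniteMeasure_restrict.2 isCompact_uIcc.measure_lt_top.ne
  have hmeas : AEStronglyMeasurable (fun t => u t i) (volume.restrict (Set.uIcc a b)) :=
    ((measurable_pi_apply i).comp hu.1).aestronglyMeasurable
  have hL2 : MemLp (fun t => u t i) 2 (volume.restrict (Set.uIcc a b)) :=
    (memLp_two_iff_integrable_sq hmeas).2
      ⟨hmeas.pow 2, (hasFiniteIntegral_iff_ofReal (ae_of_all _ fun t => sq_nonneg _)).2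
        (hu.2 _ isCompact_uIcc i)⟩
  exact hL2.integrable one_le_two

theorem LocL2.intervalIntegrable_mulVec {k n : ℕ} {u : ℝ → Fin n → ℝ} (hu : LocL2 u)
    {W : ℝ → Matrix (Fin k) (Fin n) ℝ} (hW : Continuous W) (a b : ℝ) :
    IntervalIntegrable (fun t => W t *ᵥ u t) volume a b := by
  refine IntegrableOn.intervalIntegrable (integrable_pi_iff.2 fun i => ?_)
  show IntegrableOn (fun t => ∑ j, W t i j * u t j) _
  exact integrable_finsetSum _ fun j _ =>
    (hu.integrableOn_uIcc a b j).continuousOn_mul (hW.matrix_elem i j).continuousOn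
      isCompact_uIcc

theorem LocL2.const_smul {n : ℕ} {u : ℝ → Fin n → ℝ} (hu : LocL2 u) (c : ℝ) : LocL2 (c • u) := by
  refine ⟨hu.1.const_smul c, fun K hK i => ?_⟩
  have hsq : ∀ t, ENNReal.ofReal ((c • u) t i ^ 2) =
      ENNReal.ofReal (c ^ 2) * ENNReal.ofReal (u t i ^ 2) := fun t => by
    rw [← ENNReal.ofReal_mul (sq_nonneg c), Pi.smul_apply, Pi.smul_apply, smul_eq_mul, mul_pow]
  simp only [hsq, lintegral_const_mul' _ _ ENNReal.ofReal_ne_top]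
  exact ENNReal.mul_lt_top ENNReal.ofReal_lt_top (hu.2 K hK i)

section Trajectories

-- `exp` does not depend on the norm; this one only provides the Banach-algebra structure.
attribute [local instance] Matrix.linftyOpNormedRing Matrix.linftyOpNormedAlgebra

open NormedSpace

theorem mul_exp_eq_exp_mul {a b : ℕ} {T : Matrix (Fin a) (Fin b) ℝ} {X : Mat b b} {Y : Mat a a}
    (h : T * X = Y * T) : T * exp X = exp Y * T := by
  have hpow : ∀ k : ℕ, T * X ^ k = Y ^ k * T := by
    intro k
    induction k with
    | zero => simp
    | succ k ih => rw [pow_succ, pow_succ, ← Matrix.mul_assoc, ih, Matrix.mul_assoc, h,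
        Matrix.mul_assoc]
  have hX := (exp_series_hasSum_exp' (𝕂 := ℝ) X).map (addMonoidHomMulLeft T)
    (continuous_const.matrix_mul continuous_id)
  have hY := (exp_series_hasSum_exp' (𝕂 := ℝ) Y).map (addMonoidHomMulRight T)
    (continuous_id.matrix_mul continuous_const)
  simp only [Function.comp_def, addMonoidHomMulLeft_apply, addMonoidHomMulRight_apply,
    Matrix.mul_smul, Matrix.smul_mul, hpow] at hX hY
  exact hX.unique hY

variable {d k n m : ℕ} {A : Mat d d} {B : Mat d n} {u : ℝ → Fin n → ℝ}

theorem mulVec_stateSol {T : Matrix (Fin k) (Fin d) ℝ} {A' : Mat k k} (hTA : T * A = A' * T)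
    (hu : LocL2 u) (t₀ : ℝ) (x₀ : Fin d → ℝ) (t : ℝ) :
    T *ᵥ stateSol A B t₀ x₀ u t = stateSol A' (T * B) t₀ (T *ᵥ x₀) u t := by
  have hexp : ∀ s : ℝ, T * exp (s • A) = exp (s • A') * T := fun s =>
    mul_exp_eq_exp_mul (by rw [Matrix.mul_smul, hTA, Matrix.smul_mul])
  have hint : IntervalIntegrable (fun τ => exp ((t - τ) • A) *ᵥ (B *ᵥ u τ)) volume t₀ t := by
    simp only [mulVec_mulVec]
    exact hu.intervalIntegrable_mulVec ((exp_continuous.comp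
      ((continuous_const.sub continuous_id).smul continuous_const)).matrix_mul continuous_const) _ _
  have hcomm := (mulVecLin T).toContinuousLinearMap.intervalIntegral_comp_comm hint
  simp only [LinearMap.coe_toContinuousLinearMap', mulVecLin_apply] at hcomm
  rw [stateSol, stateSol, mulVec_add, mulVec_mulVec, hexp, ← mulVec_mulVec, ← hcomm]
  congr 1
  refine intervalIntegral.integral_congr fun τ _ => ?_
  simp only [mulVec_mulVec, ← Matrix.mul_assoc, hexp]

theorem outputSol_eq_of_mul_eq {C : Matrix (Fin m) (Fin d) ℝ} {D : Matrix (Fin m) (Fin n) ℝ}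
    {T : Matrix (Fin k) (Fin d) ℝ} {A' : Mat k k} {C' : Matrix (Fin m) (Fin k) ℝ}
    (hTA : T * A = A' * T) (hC : C = C' * T) (hu : LocL2 u) (t₀ : ℝ) (x₀ : Fin d → ℝ) (t : ℝ) :
    outputSol A B C D t₀ x₀ u t = outputSol A' (T * B) C' D t₀ (T *ᵥ x₀) u t := by
  rw [outputSol, outputSol, hC, ← mulVec_mulVec, mulVec_stateSol hTA hu]

theorem stateSol_zero_smul (t₀ : ℝ) (c : ℝ) (t : ℝ) :
    stateSol A B t₀ 0 (c • u) t = c • stateSol A B t₀ 0 u t := by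
  simp only [stateSol, mulVec_zero, zero_add, Pi.smul_apply, mulVec_smul,
    intervalIntegral.integral_smul]

theorem outputSol_zero_smul {C : Matrix (Fin m) (Fin d) ℝ} {D : Matrix (Fin m) (Fin n) ℝ}
    (t₀ : ℝ) (c : ℝ) (t : ℝ) :
    outputSol A B C D t₀ 0 (c • u) t = c • outputSol A B C D t₀ 0 u t := by
  simp only [outputSol, stateSol_zero_smul, Pi.smul_apply, mulVec_smul, smul_add]

end Trajectories

section EnergySet

variable {d n m : ℕ} {A : Mat d d} {B : Mat d n} {C : Matrix (Fin m) (Fin d) ℝ}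
  {D : Matrix (Fin m) (Fin n) ℝ} {S11 : Mat n n} {S12 : Matrix (Fin n) (Fin m) ℝ}
  {S22 : Mat m m}

theorem supplyRate_smul (c : ℝ) (u : Fin n → ℝ) (y : Fin m → ℝ) :
    supplyRate S11 S12 S22 (c • u) (c • y) = c ^ 2 * supplyRate S11 S12 S22 u y := by
  simp only [supplyRate, mulVec_smul, smul_dotProduct, dotProduct_smul, smul_eq_mul]
  ring

theorem sigmaEnergySet_congr {k : ℕ} {A' : Mat k k} {B' : Mat k n}
    {C' : Matrix (Fin m) (Fin k) ℝ} {x₀ : Fin d → ℝ} {x₀' : Fin k → ℝ}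
    (h : ∀ u, LocL2 u → ∀ t₀ t,
      outputSol A B C D t₀ x₀ u t = outputSol A' B' C' D t₀ x₀' u t) :
    sigmaEnergySet A B C D S11 S12 S22 x₀ = sigmaEnergySet A' B' C' D S11 S12 S22 x₀' := by
  ext e
  refine exists_congr fun t₀ => exists_congr fun t₁ => exists_congr fun u =>
    and_congr_right fun _ => and_congr_right fun hu => ?_
  simp only [h u hu t₀]

theorem zero_mem_sigmaEnergySet (x₀ : Fin d → ℝ) :
    (0 : ℝ) ∈ sigmaEnergySet A B C D S11 S12 S22 x₀ :=
  ⟨0, 0, 0, le_rfl, ⟨measurable_const, fun K _ i => by simp⟩, by simp⟩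

theorem mul_mem_sigmaEnergySet_zero {e r : ℝ} (he : e ∈ sigmaEnergySet A B C D S11 S12 S22 0)
    (hr : 0 ≤ r) : r * e ∈ sigmaEnergySet A B C D S11 S12 S22 0 := by
  obtain ⟨t₀, t₁, u, ht, hu, rfl⟩ := he
  refine ⟨t₀, t₁, √r • u, ht, hu.const_smul _, ?_⟩
  rw [← intervalIntegral.integral_const_mul]
  refine intervalIntegral.integral_congr fun t _ => ?_
  rw [outputSol_zero_smul, Pi.smul_apply, supplyRate_smul, Real.sq_sqrt hr]
  ring

theorem sSup_sigmaEnergySet_zero (hbdd : BddAbove (sigmaEnergySet A B C D S11 S12 S22 0)) :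
    sSup (sigmaEnergySet A B C D S11 S12 S22 0) = 0 := by
  refine le_antisymm (csSup_le ⟨0, zero_mem_sigmaEnergySet 0⟩ fun e he => ?_)
    (le_csSup hbdd (zero_mem_sigmaEnergySet 0))
  obtain ⟨M, hM⟩ := hbdd
  by_contra! he_pos
  have hM0 : 0 ≤ M := hM (zero_mem_sigmaEnergySet 0)
  have hle := hM (mul_mem_sigmaEnergySet_zero he (div_nonneg (by linarith) he_pos.le) :
    (M + 1) / e * e ∈ _)
  rw [div_mul_cancel₀ _ he_pos.ne'] at hle
  linarith

end EnergySet

theorem statement9_general {d n m dh : ℕ} (A : Mat d d) (B : Mat d n) (C : Matrix (Fin m) (Fin d) ℝ)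
    (D : Matrix (Fin m) (Fin n) ℝ)
    (S11 : Mat n n) (S12 : Matrix (Fin n) (Fin m) ℝ) (S22 : Mat m m)
    (S1 : Matrix (Fin d) (Fin dh) ℝ) (S2 : Matrix (Fin d) (Fin (d - dh)) ℝ)
    (T1 : Matrix (Fin dh) (Fin d) ℝ) (T2 : Matrix (Fin (d - dh)) (Fin d) ℝ)
    (hbasis : ∀ z : Fin d → ℝ, obsMat A C *ᵥ z = 0 ↔ ∃ c : Fin (d - dh) → ℝ, z = S2 *ᵥ c)
    (hT1S1 : T1 * S1 = 1) (hT1S2 : T1 * S2 = 0)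
    (hST : S1 * T1 + S2 * T2 = 1)
    (H2 : ∀ x₀ : Fin d → ℝ, BddAbove (sigmaEnergySet A B C D S11 S12 S22 x₀)) :
    (∀ xh₀ : Fin dh → ℝ,
      BddAbove (sigmaEnergySet (T1 * A * S1) (T1 * B) (C * S1) D S11 S12 S22 xh₀)) ∧
    (∀ x₀ : Fin d → ℝ,
      sSup (sigmaEnergySet A B C D S11 S12 S22 x₀) =
        sSup (sigmaEnergySet (T1 * A * S1) (T1 * B) (C * S1) D S11 S12 S22 (T1 *ᵥ x₀))) ∧
    (∀ z : Fin d → ℝ, obsMat A C *ᵥ z = 0 →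
      sSup (sigmaEnergySet A B C D S11 S12 S22 z) = 0) := by
  have hker : SpansUnobservable A C S2 := hbasis
  have hTA := hker.mul_eq_mul_mul hT1S2 hST
  have hC := hker.eq_mul_mul hST
  have hset : ∀ x₀, sigmaEnergySet A B C D S11 S12 S22 x₀ =
      sigmaEnergySet (T1 * A * S1) (T1 * B) (C * S1) D S11 S12 S22 (T1 *ᵥ x₀) := fun x₀ =>
    sigmaEnergySet_congr fun u hu t₀ t => outputSol_eq_of_mul_eq hTA hC hu t₀ x₀ t
  have hbdd : ∀ xh₀ : Fin dh → ℝ,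
      BddAbove (sigmaEnergySet (T1 * A * S1) (T1 * B) (C * S1) D S11 S12 S22 xh₀) := fun xh₀ => by
    simpa only [hset, mulVec_mulVec, hT1S1, one_mulVec] using H2 (S1 *ᵥ xh₀)
  refine ⟨hbdd, fun x₀ => by rw [hset], fun z hz => ?_⟩
  rw [hset, hker.mulVec_eq_zero hT1S2 hz]
  exact sSup_sigmaEnergySet_zero (hbdd 0)

/-- reduction to the observable part of the state space. -/
theorem statement9 {d n m dh : ℕ} (A : Mat d d) (B : Mat d n) (C : Matrix (Fin m) (Fin d) ℝ)
    (D : Matrix (Fin m) (Fin n) ℝ)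
    (S11 : Mat n n) (S12 : Matrix (Fin n) (Fin m) ℝ) (S22 : Mat m m)
    (hS11 : S11.IsSymm) (hS22 : S22.IsSymm)
    (hrank : (obsMat A C).rank = dh)
    (S1 : Matrix (Fin d) (Fin dh) ℝ) (S2 : Matrix (Fin d) (Fin (d - dh)) ℝ)
    (T1 : Matrix (Fin dh) (Fin d) ℝ) (T2 : Matrix (Fin (d - dh)) (Fin d) ℝ)
    (hbasis : ∀ z : Fin d → ℝ, obsMat A C *ᵥ z = 0 ↔ ∃ c : Fin (d - dh) → ℝ, z = S2 *ᵥ c)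
    (hT1S1 : T1 * S1 = 1) (hT1S2 : T1 * S2 = 0) (hT2S1 : T2 * S1 = 0) (hT2S2 : T2 * S2 = 1)
    (hST : S1 * T1 + S2 * T2 = 1)
    (H2 : ∀ x₀ : Fin d → ℝ, BddAbove (sigmaEnergySet A B C D S11 S12 S22 x₀)) :
    (∀ xh₀ : Fin dh → ℝ,
      BddAbove (sigmaEnergySet (T1 * A * S1) (T1 * B) (C * S1) D S11 S12 S22 xh₀)) ∧
    (∀ x₀ : Fin d → ℝ,
      sSup (sigmaEnergySet A B C D S11 S12 S22 x₀) =
        sSup (sigmaEnergySet (T1 * A * S1) (T1 * B) (C * S1) D S11 S12 S22 (T1 *ᵥ x₀))) ∧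
    (∀ z : Fin d → ℝ, obsMat A C *ᵥ z = 0 →
      sSup (sigmaEnergySet A B C D S11 S12 S22 z) = 0) :=
  statement9_general A B C D S11 S12 S22 S1 S2 T1 T2 hbasis hT1S1 hT1S2 hST H2

end
end

section
/- Let P, Q ∈ ℝ^{n×n}[ξ] be such that (P,Q) is a positive-real pair, Q is nonsingular (det Q ≠ 0) and Q⁻¹P is proper, and let D₀ := lim_{ξ→∞}(Q⁻¹P)(ξ). Define P' := P − ½·Q(D₀ − D₀ᵀ) and Q' := Q. Then (P',Q') is a positive-real pair, Q'⁻¹P' is proper, and lim_{ξ→∞}(Q'⁻¹P')(ξ) = ½(D₀ + D₀ᵀ), which is a symmetric matrix. -/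
open MeasureTheory Matrix Polynomial
open scoped ComplexOrder

noncomputable section

/-- evaluation of a real polynomial matrix at a complex point -/
def evalC {m n : Type*} (P : Matrix m n (Polynomial ℝ)) (z : ℂ) : Matrix m n ℂ :=
  Matrix.of fun i j => Polynomial.aeval z (P i j)

/-- the polynomial matrix `P(−ξ)ᵀ` -/
def starT {m n : Type*} (P : Matrix m n (Polynomial ℝ)) : Matrix n m (Polynomial ℝ) :=
  Matrix.of fun i j => (P j i).comp (-Polynomial.X)

/-- positive-real pair of polynomial matrices -/
def PosRealPair {k : Type*} [Fintype k] [DecidableEq k]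
    (P Q : Matrix k k (Polynomial ℝ)) : Prop :=
  (∀ z : ℂ, 0 < z.re →
      (evalC P z * (evalC Q ((starRingEnd ℂ) z))ᵀ +
        evalC Q z * (evalC P ((starRingEnd ℂ) z))ᵀ).PosSemidef) ∧
  (∀ z : ℂ, 0 ≤ z.re →
      (Matrix.fromCols (evalC P z) (-(evalC Q z))).rank = Fintype.card k) ∧
  (∀ (p : k → Polynomial ℝ) (z : ℂ),
      Matrix.vecMul p (P * starT Q + Q * starT P) = 0 →
      Matrix.vecMul (fun i => Polynomial.aeval z (p i))
        (Matrix.fromCols (evalC P z) (-(evalC Q z))) = 0 →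
      (fun i => Polynomial.aeval z (p i)) = (0 : k → ℂ))

/-- the substitution ξ ↦ −ξ on real polynomials, as a ring isomorphism -/
def negX : Polynomial ℝ ≃+* Polynomial ℝ where
  toFun p := p.comp (-Polynomial.X)
  invFun p := p.comp (-Polynomial.X)
  left_inv p := by
    show (p.comp (-Polynomial.X)).comp (-Polynomial.X) = p
    rw [Polynomial.comp_assoc]
    simp
  right_inv p := by
    show (p.comp (-Polynomial.X)).comp (-Polynomial.X) = p
    rw [Polynomial.comp_assoc]
    simp
  map_add' p q := Polynomial.add_comp
  map_mul' p q := Polynomial.mul_comp p q (-Polynomial.X)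

/-- the substitution ξ ↦ −ξ on real rational functions -/
def ratNeg : RatFunc ℝ →+* RatFunc ℝ :=
  RatFunc.mapRingHom (negX : Polynomial ℝ →+* Polynomial ℝ)
    (by
      intro p hp
      have hp0 : p ≠ 0 := nonZeroDivisors.ne_zero hp
      refine Submonoid.mem_comap.mpr (mem_nonZeroDivisors_of_ne_zero ?_)
      intro h
      exact hp0 (negX.injective (by simpa using h)))

/-- embed real matrices into matrices of rational functions -/
def ratOf {m n : Type*} (M : Matrix m n ℝ) : Matrix m n (RatFunc ℝ) :=
  M.map (algebraMap ℝ (RatFunc ℝ))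

/-- embed polynomial matrices into matrices of rational functions -/
def ratM {m n : Type*} (M : Matrix m n (Polynomial ℝ)) : Matrix m n (RatFunc ℝ) :=
  M.map (algebraMap (Polynomial ℝ) (RatFunc ℝ))

/-- the rational matrix `M(−ξ)ᵀ` -/
def paraT {m n : Type*} (M : Matrix m n (RatFunc ℝ)) : Matrix n m (RatFunc ℝ) :=
  (M.map ratNeg)ᵀ

/-- the transfer function `H = D + C (ξI − A)⁻¹ B` -/
def transferFn {d n m : ℕ} (A : Matrix (Fin d) (Fin d) ℝ) (B : Matrix (Fin d) (Fin n) ℝ)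
    (C : Matrix (Fin m) (Fin d) ℝ) (D : Matrix (Fin m) (Fin n) ℝ) :
    Matrix (Fin m) (Fin n) (RatFunc ℝ) :=
  ratOf D + ratOf C *
    (Matrix.diagonal (fun _ => (RatFunc.X : RatFunc ℝ)) - ratOf A)⁻¹ * ratOf B

/-- evaluation of a real rational function at a complex point (junk value at poles) -/
def evalRat (f : RatFunc ℝ) (z : ℂ) : ℂ := RatFunc.eval (algebraMap ℝ ℂ) z f

/-- `Z` is a spectral factor of `Φ`: `Z(−ξ)ᵀZ(ξ) = Φ(ξ)`, no entry of `Z` has a pole in the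
open right half-plane, and `Z(λ)` has full row rank for every `λ` there -/
def IsSpectralFactor {q k : ℕ} (Z : Matrix (Fin q) (Fin k) (RatFunc ℝ))
    (Φ : Matrix (Fin k) (Fin k) (RatFunc ℝ)) : Prop :=
  paraT Z * Z = Φ ∧
  (∀ (i : Fin q) (j : Fin k) (z : ℂ), 0 < z.re → Polynomial.aeval z ((Z i j).denom) ≠ 0) ∧
  (∀ z : ℂ, 0 < z.re → (Matrix.of fun i j => evalRat (Z i j) z).rank = q)

/-- the rational matrix `W + L(ξI − A)⁻¹B` -/
def Zfac {d n q : ℕ} (A : Matrix (Fin d) (Fin d) ℝ) (B : Matrix (Fin d) (Fin n) ℝ)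
    (L : Matrix (Fin q) (Fin d) ℝ) (W : Matrix (Fin q) (Fin n) ℝ) :
    Matrix (Fin q) (Fin n) (RatFunc ℝ) :=
  ratOf W + ratOf L *
    (Matrix.diagonal (fun _ => (RatFunc.X : RatFunc ℝ)) - ratOf A)⁻¹ * ratOf B

/-- a real rational function is proper if its numerator degree is at most its
denominator degree -/
def ratProper (f : RatFunc ℝ) : Prop := f.num.degree ≤ f.denom.degree

/-- the limit of a rational function at infinity: the ratio of the leading coefficients when
the degrees agree, and `0` otherwise (in particular when the numerator degree is smaller) -/
def ratLimInf (f : RatFunc ℝ) : ℝ :=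
  if f.num.degree = f.denom.degree then f.num.leadingCoeff / f.denom.leadingCoeff else 0

/-- a rational matrix is proper if every entry is proper -/
def ProperM {m n : Type*} (M : Matrix m n (RatFunc ℝ)) : Prop := ∀ i j, ratProper (M i j)

/-- the entrywise limit at infinity of a rational matrix -/
def limM {m n : Type*} (M : Matrix m n (RatFunc ℝ)) : Matrix m n ℝ :=
  Matrix.of fun i j => ratLimInf (M i j)

/-! With `K := ½(D₀ − D₀ᵀ)`, which is skew-symmetric, the new pair is `(P − QK, Q)`.
Because `K + Kᵀ = 0`, the term `QK` cancels from `P Q⋆ + Q P⋆`, both as a polynomial matrix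
(`⋆` = `starT`) and evaluated at `(λ, λ̄)`. Moreover `[P − QK, −Q] = [P, −Q] · [[I, 0], [K, I]]`
with a constant invertible factor, which changes neither the rank nor the vanishing of
`v [P, −Q]`. On the transfer-function side `Q⁻¹(P − QK) = Q⁻¹P − K`, and subtracting a constant
keeps every entry proper and lowers its value at infinity by that constant. -/

namespace RatFunc

variable {K : Type*} [Field K]

theorem num_denom_sub_algebraMap (f : RatFunc K) (c : K) :
    (f - algebraMap K (RatFunc K) c).num = f.num - Polynomial.C c * f.denom ∧
      (f - algebraMap K (RatFunc K) c).denom = f.denom := by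
  classical
  have hden : algebraMap K[X] (RatFunc K) f.denom ≠ 0 := algebraMap_ne_zero f.denom_ne_zero
  have hdiv : f - algebraMap K (RatFunc K) c =
      algebraMap K[X] (RatFunc K) (f.num - Polynomial.C c * f.denom) /
        algebraMap K[X] (RatFunc K) f.denom := by
    rw [eq_div_iff hden, sub_mul, map_sub, map_mul, algebraMap_C, ← algebraMap_eq_C]
    nth_rw 1 [← num_div_denom f]
    rw [div_mul_cancel₀ _ hden]
  have hcop : IsCoprime (f.num - Polynomial.C c * f.denom) f.denom := by
    simpa [sub_eq_add_neg] using f.isCoprime_num_denom.add_mul_right_left (-Polynomial.C c)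
  have hgcd : gcd (f.num - Polynomial.C c * f.denom) f.denom = 1 := by
    rw [← normalize_gcd, normalize_eq_one, gcd_isUnit_iff]
    exact hcop
  rw [hdiv, num_div, denom_div _ f.denom_ne_zero, hgcd]
  simp [f.monic_denom.leadingCoeff]

end RatFunc

theorem ratLimInf_eq_coeff_of_ratProper {f : RatFunc ℝ} (hf : ratProper f) :
    ratLimInf f = f.num.coeff f.denom.natDegree := by
  rw [ratLimInf, f.monic_denom.leadingCoeff, div_one]
  split_ifs with hdeg
  · rw [leadingCoeff, natDegree_eq_of_degree_eq hdeg]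
  · exact (coeff_natDegree_eq_zero_of_degree_lt (lt_of_le_of_ne hf hdeg)).symm

theorem ratProper_sub_algebraMap {f : RatFunc ℝ} (hf : ratProper f) (c : ℝ) :
    ratProper (f - algebraMap ℝ (RatFunc ℝ) c) := by
  obtain ⟨hnum, hden⟩ := RatFunc.num_denom_sub_algebraMap f c
  rw [ratProper, hnum, hden, ← smul_eq_C_mul]
  exact (degree_sub_le _ _).trans (max_le hf (degree_smul_le _ _))

theorem ratLimInf_sub_algebraMap {f : RatFunc ℝ} (hf : ratProper f) (c : ℝ) :
    ratLimInf (f - algebraMap ℝ (RatFunc ℝ) c) = ratLimInf f - c := by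
  obtain ⟨hnum, hden⟩ := RatFunc.num_denom_sub_algebraMap f c
  rw [ratLimInf_eq_coeff_of_ratProper (ratProper_sub_algebraMap hf c),
    ratLimInf_eq_coeff_of_ratProper hf, hnum, hden, coeff_sub, coeff_C_mul,
    f.monic_denom.coeff_natDegree, mul_one]

section Matrix

variable {m n : Type*}

theorem ProperM.sub_ratOf {G : Matrix m n (RatFunc ℝ)} (hG : ProperM G) (K : Matrix m n ℝ) :
    ProperM (G - ratOf K) :=
  fun i j => ratProper_sub_algebraMap (hG i j) (K i j)

theorem limM_sub_ratOf {G : Matrix m n (RatFunc ℝ)} (hG : ProperM G) (K : Matrix m n ℝ) :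
    limM (G - ratOf K) = limM G - K := by
  ext i j
  exact ratLimInf_sub_algebraMap (hG i j) (K i j)

variable [Fintype n]

theorem ratM_sub_mul_map_C (P Q : Matrix m n ℝ[X]) (K : Matrix n n ℝ) :
    ratM (P - Q * K.map C) = ratM P - ratM Q * ratOf K := by
  have hC : algebraMap ℝ[X] (RatFunc ℝ) ∘ C = algebraMap ℝ (RatFunc ℝ) := by
    ext x
    simp [RatFunc.algebraMap_eq_C]
  rw [ratM, ratM, ratM, Matrix.map_sub _ (map_sub _), Matrix.map_mul, Matrix.map_map, hC, ratOf]

theorem inv_ratM_mul_ratM_sub_mul_map_C [DecidableEq n] {P Q : Matrix n n ℝ[X]}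
    (hQ : Q.det ≠ 0) (K : Matrix n n ℝ) :
    (ratM Q)⁻¹ * ratM (P - Q * K.map C) = (ratM Q)⁻¹ * ratM P - ratOf K := by
  have hdet : IsUnit (ratM Q).det := by
    rw [ratM, ← RingHom.mapMatrix_apply, ← RingHom.map_det, isUnit_iff_ne_zero]
    exact RatFunc.algebraMap_ne_zero hQ
  rw [ratM_sub_mul_map_C, Matrix.mul_sub, ← Matrix.mul_assoc, nonsing_inv_mul _ hdet,
    Matrix.one_mul]

theorem evalC_sub_mul_map_C (P Q : Matrix m n ℝ[X]) (K : Matrix n n ℝ) (z : ℂ) :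
    evalC (P - Q * K.map C) z = evalC P z - evalC Q z * K.map (algebraMap ℝ ℂ) := by
  ext i j
  simp [evalC, Matrix.mul_apply]

theorem starT_sub_mul_map_C (P Q : Matrix m n ℝ[X]) (K : Matrix n n ℝ) :
    starT (P - Q * K.map C) = starT P - (K.map C)ᵀ * starT Q := by
  have hC : ⇑negX ∘ C = C := by
    ext x : 1
    exact C_comp
  change ((P - Q * K.map C).map negX)ᵀ = (P.map negX)ᵀ - (K.map C)ᵀ * (Q.map negX)ᵀ
  rw [Matrix.map_sub _ (map_sub _), Matrix.map_mul, Matrix.map_map, hC,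
    transpose_sub, transpose_mul]

theorem sub_mul_mul_add_mul_sub_mul {R : Type*} [Ring R] (A B : Matrix m n R)
    {K : Matrix n n R} (hK : Kᵀ = -K) {l : Type*} (C D : Matrix n l R) :
    (A - B * K) * D + B * (C - Kᵀ * D) = A * D + B * C := by
  rw [hK, Matrix.sub_mul, Matrix.mul_sub, Matrix.neg_mul, Matrix.mul_neg, Matrix.mul_assoc]
  abel

theorem fromCols_sub_mul_neg {R : Type*} [Ring R] [DecidableEq n]
    (A B : Matrix m n R) (K : Matrix n n R) :
    fromCols (A - B * K) (-B) =
      fromCols A (-B) * (fromBlocks 1 0 K 1 : Matrix (n ⊕ n) (n ⊕ n) R) := by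
  rw [fromCols_mul_fromBlocks, Matrix.mul_one, Matrix.mul_zero, zero_add, Matrix.mul_one,
    Matrix.neg_mul, sub_eq_add_neg]

theorem PosRealPair.sub_mul_map_C [DecidableEq n] {P Q : Matrix n n ℝ[X]}
    (h : PosRealPair P Q) {K : Matrix n n ℝ} (hK : Kᵀ = -K) :
    PosRealPair (P - Q * K.map C) Q := by
  obtain ⟨hpos, hrank, hkernel⟩ := h
  have hK_map {S : Type} [Ring S] (f : ℝ →+* S) : (K.map f)ᵀ = -K.map f := by
    rw [← transpose_map, hK, Matrix.map_neg _ (map_neg f)]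
  set T : Matrix (n ⊕ n) (n ⊕ n) ℂ := fromBlocks 1 0 (K.map (algebraMap ℝ ℂ)) 1
  have hT : IsUnit T := by
    simp [T, isUnit_iff_isUnit_det]
  have hcols : ∀ z, fromCols (evalC (P - Q * K.map C) z) (-evalC Q z) =
      fromCols (evalC P z) (-evalC Q z) * T := fun z => by
    rw [evalC_sub_mul_map_C, fromCols_sub_mul_neg]
  refine ⟨fun z hz => ?_, fun z hz => ?_, fun p z hp hpz => ?_⟩
  · rw [evalC_sub_mul_map_C, evalC_sub_mul_map_C, transpose_sub, transpose_mul,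
      sub_mul_mul_add_mul_sub_mul _ _ (hK_map _)]
    exact hpos z hz
  · rw [hcols, rank_mul_eq_left_of_isUnit_det _ _ ((isUnit_iff_isUnit_det T).mp hT)]
    exact hrank z hz
  · rw [starT_sub_mul_map_C, sub_mul_mul_add_mul_sub_mul _ _ (hK_map C)] at hp
    rw [hcols, ← vecMul_vecMul, ← zero_vecMul T] at hpz
    exact hkernel p z hp (vecMul_injective_of_isUnit hT hpz)

end Matrix

theorem statement11 {n : ℕ} (P Q : Matrix (Fin n) (Fin n) (Polynomial ℝ))
    (hpr : PosRealPair P Q) (hQ : Q.det ≠ 0)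
    (hprop : ProperM ((ratM Q)⁻¹ * ratM P))
    (D₀ : Matrix (Fin n) (Fin n) ℝ) (hD₀ : D₀ = limM ((ratM Q)⁻¹ * ratM P)) :
    PosRealPair (P - (1 / 2 : ℝ) • (Q * ((D₀ - D₀ᵀ).map Polynomial.C))) Q ∧
    ProperM ((ratM Q)⁻¹ * ratM (P - (1 / 2 : ℝ) • (Q * ((D₀ - D₀ᵀ).map Polynomial.C)))) ∧
    limM ((ratM Q)⁻¹ * ratM (P - (1 / 2 : ℝ) • (Q * ((D₀ - D₀ᵀ).map Polynomial.C)))) =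
      (1 / 2 : ℝ) • (D₀ + D₀ᵀ) ∧
    ((1 / 2 : ℝ) • (D₀ + D₀ᵀ)).IsSymm := by
  set K : Matrix (Fin n) (Fin n) ℝ := (1 / 2 : ℝ) • (D₀ - D₀ᵀ)
  have hK : Kᵀ = -K := by
    simp only [K, transpose_smul, transpose_sub, transpose_transpose]
    module
  have hP' : (1 / 2 : ℝ) • (Q * (D₀ - D₀ᵀ).map C) = Q * K.map C := by
    rw [← Matrix.mul_smul, Matrix.map_smul _ _ (fun a => (smul_C _ a).symm)]
  rw [hP', inv_ratM_mul_ratM_sub_mul_map_C hQ, limM_sub_ratOf hprop, ← hD₀]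
  refine ⟨hpr.sub_mul_map_C hK, hprop.sub_ratOf K, ?_,
    (isSymm_add_transpose_self D₀).smul _⟩
  simp only [K]
  module
end
end

section
/- Let P, Q ∈ ℝ^{n×n}[ξ], let Y ∈ ℝ^{n×n}[ξ] be unimodular, and let S ∈ ℝ^{2n×2n} be nonsingular with S·J·Sᵀ = Σ, where J := ½[[0, I_n],[I_n, 0]] and Σ := [[I_n, 0],[0, −I_n]]. Define P̂, Q̂ ∈ ℝ^{n×n}[ξ] by [P̂ −Q̂] := Y·[P −Q]·S. Then (P,Q) is a bounded-real pair if and only if (P̂,Q̂) is a positive-real pair. -/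
open MeasureTheory Matrix Polynomial
open scoped ComplexOrder

noncomputable section

/-- bounded-real pair of polynomial matrices -/
def BoundedRealPair {k l : Type*} [Fintype k] [DecidableEq k] [Fintype l]
    (P : Matrix k l (Polynomial ℝ)) (Q : Matrix k k (Polynomial ℝ)) : Prop :=
  (∀ z : ℂ, 0 ≤ z.re →
      (evalC Q z * (evalC Q ((starRingEnd ℂ) z))ᵀ -
        evalC P z * (evalC P ((starRingEnd ℂ) z))ᵀ).PosSemidef) ∧
  (∀ z : ℂ, 0 ≤ z.re →
      (Matrix.fromCols (evalC P z) (-(evalC Q z))).rank = Fintype.card k) ∧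
  (∀ (p : k → Polynomial ℝ) (z : ℂ),
      Matrix.vecMul p (Q * starT Q - P * starT P) = 0 →
      Matrix.vecMul (fun i => Polynomial.aeval z (p i))
        (Matrix.fromCols (evalC P z) (-(evalC Q z))) = 0 →
      (fun i => Polynomial.aeval z (p i)) = (0 : k → ℂ))


/-!
Write `J₀ = [[0, I], [I, 0]]` and `Σ = diag(I, -I)`. For square blocks,
`[a, -b] J₀ [c, -d]ᵀ = -(a dᵀ + b cᵀ)` and `[a, -b] Σ [c, -d]ᵀ = a cᵀ - b dᵀ`, so the relation
`S J₀ Sᵀ = 2 Σ` turns `[P̂, -Q̂] = Y [P, -Q] S` into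
`P̂ Q̂⋆ + Q̂ P̂⋆ = 2 Y (Q Q⋆ - P P⋆) Y⋆`, for `⋆` the substitution `ξ ↦ -ξ` followed by
transposition as well as for evaluation at `λ` on the left and at `conj λ` on the right.
Hence the three defining conditions transfer one by one: positivity because congruence by
the invertible `Y(λ)` preserves semidefiniteness (and positivity on `Re λ > 0` extends to
`Re λ ≥ 0` by continuity), the rank condition because `Y(λ)` and `S` are invertible, and the
kernel condition through the bijection `p ↦ Yᵀ p` of polynomial vectors.
-/

section BlockAlgebra

variable {R : Type*} [CommRing R] {k : Type*} [Fintype k] [DecidableEq k]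

theorem fromCols_mul_fromBlocks_swap_mul_fromRows (a b c d : Matrix k k R) :
    Matrix.fromCols a (-b) * Matrix.fromBlocks (0 : Matrix k k R) 1 1 (0 : Matrix k k R) *
      Matrix.fromRows c (-d) = -(a * d + b * c) := by
  rw [Matrix.fromCols_mul_fromBlocks, Matrix.fromCols_mul_fromRows]
  simp

theorem fromCols_mul_fromBlocks_sign_mul_fromRows (a b c d : Matrix k k R) :
    Matrix.fromCols a (-b) * Matrix.fromBlocks (1 : Matrix k k R) 0 0 (-1 : Matrix k k R) *
      Matrix.fromRows c (-d) = a * c - b * d := by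
  rw [Matrix.fromCols_mul_fromBlocks, Matrix.fromCols_mul_fromRows]
  simp [sub_eq_add_neg]

variable [Algebra ℝ R]

theorem map_algebraMap_mul_fromBlocks_swap_mul_transpose {S : Matrix (k ⊕ k) (k ⊕ k) ℝ}
    (hS : S * ((1 / 2 : ℝ) • Matrix.fromBlocks (0 : Matrix k k ℝ) 1 1 0) * Sᵀ =
      Matrix.fromBlocks 1 0 0 (-1)) :
    S.map (algebraMap ℝ R) * Matrix.fromBlocks (0 : Matrix k k R) 1 1 (0 : Matrix k k R) *
        (S.map (algebraMap ℝ R))ᵀ = (2 : ℝ) • Matrix.fromBlocks 1 0 0 (-1) := by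
  have h := congrArg (Algebra.ofId ℝ R).mapMatrix hS
  simp only [map_mul, map_smul, AlgHom.mapMatrix_apply, fromBlocks_map, transpose_map,
    Matrix.map_neg _ (map_neg (Algebra.ofId ℝ R)), Matrix.map_zero _ (map_zero _),
    Matrix.map_one _ (map_zero _) (map_one _)] at h
  rw [← h, Matrix.mul_smul, Matrix.smul_mul, smul_smul]
  norm_num
  rfl

theorem mul_transpose_add_mul_transpose_eq {P Q Ph Qh Y P₂ Q₂ Ph₂ Qh₂ Y₂ : Matrix k k R}
    {S : Matrix (k ⊕ k) (k ⊕ k) ℝ}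
    (hS : S * ((1 / 2 : ℝ) • Matrix.fromBlocks (0 : Matrix k k ℝ) 1 1 0) * Sᵀ =
      Matrix.fromBlocks 1 0 0 (-1))
    (h : Matrix.fromCols Ph (-Qh) = Y * Matrix.fromCols P (-Q) * S.map (algebraMap ℝ R))
    (h₂ : Matrix.fromCols Ph₂ (-Qh₂) = Y₂ * Matrix.fromCols P₂ (-Q₂) * S.map (algebraMap ℝ R)) :
    Ph * Qh₂ᵀ + Qh * Ph₂ᵀ = (2 : ℝ) • (Y * (Q * Q₂ᵀ - P * P₂ᵀ) * Y₂ᵀ) := by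
  have h₂t : Matrix.fromRows Ph₂ᵀ (-Qh₂ᵀ) =
      (S.map (algebraMap ℝ R))ᵀ * Matrix.fromRows P₂ᵀ (-Q₂ᵀ) * Y₂ᵀ := by
    simpa [Matrix.transpose_fromCols, Matrix.mul_assoc] using congrArg transpose h₂
  calc Ph * Qh₂ᵀ + Qh * Ph₂ᵀ
      = -(Matrix.fromCols Ph (-Qh) * Matrix.fromBlocks (0 : Matrix k k R) 1 1 (0 : Matrix k k R) *
          Matrix.fromRows Ph₂ᵀ (-Qh₂ᵀ)) := by
        rw [fromCols_mul_fromBlocks_swap_mul_fromRows, neg_neg]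
    _ = -(Y * Matrix.fromCols P (-Q) * (S.map (algebraMap ℝ R) *
          Matrix.fromBlocks (0 : Matrix k k R) 1 1 0 * (S.map (algebraMap ℝ R))ᵀ) *
          Matrix.fromRows P₂ᵀ (-Q₂ᵀ) * Y₂ᵀ) := by
        rw [h, h₂t]; simp only [Matrix.mul_assoc]
    _ = (2 : ℝ) • (Y * (Q * Q₂ᵀ - P * P₂ᵀ) * Y₂ᵀ) := by
        rw [map_algebraMap_mul_fromBlocks_swap_mul_transpose hS, Matrix.mul_smul, Matrix.smul_mul,
          Matrix.smul_mul, Matrix.mul_assoc Y, Matrix.mul_assoc Y,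
          fromCols_mul_fromBlocks_sign_mul_fromRows, ← smul_neg, ← Matrix.neg_mul,
          ← Matrix.mul_neg, neg_sub]

end BlockAlgebra

theorem vecMul_eq_zero_iff_of_isUnit_det {R : Type*} [CommRing R] {k : Type*} [Fintype k]
    [DecidableEq k] {A : Matrix k k R} (hA : IsUnit A.det) {v : k → R} :
    v ᵥ* A = 0 ↔ v = 0 :=
  (vecMul_injective_of_isUnit ((isUnit_iff_isUnit_det A).2 hA)).eq_iff' (zero_vecMul A)

theorem isUnit_det_map {R R' : Type*} [CommRing R] [CommRing R'] {k : Type*} [Fintype k]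
    [DecidableEq k] (f : R →+* R') {A : Matrix k k R} (hA : IsUnit A.det) :
    IsUnit (A.map f).det := by
  simpa only [RingHom.map_det, RingHom.mapMatrix_apply] using hA.map f

section Evaluation

variable {k l m : Type*}

theorem evalC_mul [Fintype l] (A : Matrix k l ℝ[X]) (B : Matrix l m ℝ[X]) (z : ℂ) :
    evalC (A * B) z = evalC A z * evalC B z :=
  Matrix.map_mul (f := (aeval z).toRingHom)

theorem evalC_fromCols_neg (A B : Matrix k l ℝ[X]) (z : ℂ) :
    evalC (Matrix.fromCols A (-B)) z = Matrix.fromCols (evalC A z) (-(evalC B z)) := by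
  ext i (j | j) <;> simp [evalC]

theorem transpose_evalC_conj (A : Matrix k l ℝ[X]) (z : ℂ) :
    (evalC A ((starRingEnd ℂ) z))ᵀ = (evalC A z)ᴴ := by
  ext i j; simp [evalC, conjTranspose_apply, aeval_conj]

theorem isUnit_det_evalC [Fintype k] [DecidableEq k] {A : Matrix k k ℝ[X]} (hA : IsUnit A.det)
    (z : ℂ) : IsUnit (evalC A z).det :=
  (isUnit_det_map (aeval z).toRingHom hA :)

theorem continuous_evalC (A : Matrix k l ℝ[X]) : Continuous (evalC A) :=
  continuous_matrix fun i j => Polynomial.continuous_aeval (A i j)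

theorem aeval_vecMul [Fintype k] (p : k → ℝ[X]) (A : Matrix k l ℝ[X]) (z : ℂ) :
    (fun j => aeval z ((p ᵥ* A) j)) = (fun i => aeval z (p i)) ᵥ* evalC A z :=
  funext (RingHom.map_vecMul (aeval z).toRingHom A p)

theorem continuous_evalC_mul_transpose_evalC_conj [Fintype l] (A B : Matrix k l ℝ[X]) :
    Continuous fun z => evalC A z * (evalC B ((starRingEnd ℂ) z))ᵀ :=
  (continuous_evalC A).matrix_mul
    ((continuous_evalC B).comp Complex.continuous_conj).matrix_transpose

end Evaluation

theorem starT_eq_transpose_map {k l : Type*} (A : Matrix k l ℝ[X]) :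
    starT A = (A.map (aeval (-X)))ᵀ := by
  ext i j; simp [starT, comp_eq_aeval]

theorem isUnit_det_starT {k : Type*} [Fintype k] [DecidableEq k] {A : Matrix k k ℝ[X]}
    (hA : IsUnit A.det) : IsUnit (starT A).det := by
  have h := hA.map (aeval (-X : ℝ[X]))
  rwa [AlgHom.map_det, ← det_transpose] at h

section PosSemidef

variable {k : Type*} [Fintype k]

theorem isClosed_setOf_posSemidef : IsClosed {A : Matrix k k ℂ | A.PosSemidef} := by
  simp only [posSemidef_iff_dotProduct_mulVec, Set.ofPred_and, Set.ofPred_forall]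
  refine .inter (isClosed_eq continuous_id.matrix_conjTranspose continuous_id) ?_
  exact isClosed_iInter fun x => isClosed_le continuous_const
    (continuous_const.dotProduct (continuous_id.matrix_mulVec continuous_const))

theorem posSemidef_of_re_nonneg_of_continuous {F : ℂ → Matrix k k ℂ} (hF : Continuous F)
    (h : ∀ z : ℂ, 0 < z.re → (F z).PosSemidef) {z : ℂ} (hz : 0 ≤ z.re) : (F z).PosSemidef := by
  have hsub : closure {z : ℂ | 0 < z.re} ⊆ F ⁻¹' {A | A.PosSemidef} :=
    closure_minimal (fun z hz => h z hz) (isClosed_setOf_posSemidef.preimage hF)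
  exact hsub (by rwa [Complex.closure_setOfPred_lt_re])

theorem posSemidef_smul_mul_mul_conjTranspose_iff [DecidableEq k] {U A : Matrix k k ℂ}
    (hU : IsUnit U.det) {c : ℝ} (hc : 0 < c) :
    (c • (U * A * Uᴴ)).PosSemidef ↔ A.PosSemidef := by
  have hconj := ((isUnit_iff_isUnit_det U).2 hU).posSemidef_star_right_conjugate_iff (x := A)
  rw [star_eq_conjTranspose] at hconj
  refine ⟨fun h' => hconj.1 ?_, fun h' => (hconj.2 h').smul hc.le⟩
  simpa [smul_smul, hc.ne'] using h'.smul (inv_nonneg.2 hc.le)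

end PosSemidef

/-- Condition (c) shared by both kinds of pair, with `Φ` the para-Hermitian form of the pair and
`H = [P, -Q]`. -/
def KernelCondition {k l : Type*} [Fintype k] (Φ : Matrix k k ℝ[X]) (H : Matrix k l ℝ[X]) :
    Prop :=
  ∀ (p : k → ℝ[X]) (z : ℂ), p ᵥ* Φ = 0 →
    (fun i => aeval z (p i)) ᵥ* evalC H z = 0 → (fun i => aeval z (p i)) = (0 : k → ℂ)

theorem kernelCondition_smul_mul_mul_iff {k l : Type*} [Fintype k] [DecidableEq k] [Fintype l]
    [DecidableEq l] {Φ Y Y₂ : Matrix k k ℝ[X]} {H : Matrix k l ℝ[X]} {T : Matrix l l ℝ[X]}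
    (hY : IsUnit Y.det) (hY₂ : IsUnit Y₂.det) (hT : IsUnit T.det) {c : ℝ} (hc : c ≠ 0) :
    KernelCondition (c • (Y * Φ * Y₂)) (Y * H * T) ↔ KernelCondition Φ H := by
  have hsurj : Function.Surjective (fun p => p ᵥ* Y) :=
    vecMul_surjective_iff_isUnit.2 ((isUnit_iff_isUnit_det Y).2 hY)
  unfold KernelCondition
  conv_rhs => rw [hsurj.forall]
  refine forall_congr' fun p => forall_congr' fun z => ?_
  have hpoly : p ᵥ* (c • (Y * Φ * Y₂)) = 0 ↔ (p ᵥ* Y) ᵥ* Φ = 0 := by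
    rw [vecMul_smul, smul_eq_zero_iff_right hc, Matrix.mul_assoc, ← vecMul_vecMul,
      ← vecMul_vecMul, vecMul_eq_zero_iff_of_isUnit_det hY₂]
  have heval : (fun i => aeval z (p i)) ᵥ* evalC (Y * H * T) z = 0 ↔
      ((fun i => aeval z (p i)) ᵥ* evalC Y z) ᵥ* evalC H z = 0 := by
    rw [evalC_mul, evalC_mul, ← vecMul_vecMul, vecMul_eq_zero_iff_of_isUnit_det
      (isUnit_det_evalC hT z), vecMul_vecMul]
  rw [aeval_vecMul, hpoly, heval, vecMul_eq_zero_iff_of_isUnit_det (isUnit_det_evalC hY z)]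

section Transform

variable {k : Type*} [Fintype k] {P Q Ph Qh Y : Matrix k k ℝ[X]}
  {S : Matrix (k ⊕ k) (k ⊕ k) ℝ}
  (h : Matrix.fromCols Ph (-Qh) = Y * Matrix.fromCols P (-Q) * S.map (algebraMap ℝ ℝ[X]))
include h

theorem fromCols_map_eq_of_fromCols_eq {R : Type*} [CommRing R] [Algebra ℝ R]
    (f : ℝ[X] →ₐ[ℝ] R) :
    Matrix.fromCols (Ph.map f) (-(Qh.map f)) =
      Y.map f * Matrix.fromCols (P.map f) (-(Q.map f)) * S.map (algebraMap ℝ R) := by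
  have h' := congrArg (Matrix.map · (f : ℝ[X] →+* R)) h
  simp only [Matrix.map_mul, Matrix.fromCols_map, Matrix.map_neg f (map_neg f), Matrix.map_map,
    Function.comp_def, RingHom.coe_coe, AlgHom.commutes] at h'
  exact h'

variable [DecidableEq k]

theorem rank_fromCols_evalC_eq (hY : IsUnit Y.det) (hS' : IsUnit S.det) (z : ℂ) :
    (Matrix.fromCols (evalC Ph z) (-(evalC Qh z))).rank =
      (Matrix.fromCols (evalC P z) (-(evalC Q z))).rank := by
  rw [← evalC_fromCols_neg, ← evalC_fromCols_neg, h, evalC_mul, evalC_mul,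
    rank_mul_eq_left_of_isUnit_det _ _ (isUnit_det_evalC (isUnit_det_map _ hS') z),
    rank_mul_eq_right_of_isUnit_det _ _ (isUnit_det_evalC hY z)]

variable (hS : S * ((1 / 2 : ℝ) • Matrix.fromBlocks (0 : Matrix k k ℝ) 1 1 0) * Sᵀ =
    Matrix.fromBlocks 1 0 0 (-1))
include hS

theorem mul_starT_add_mul_starT_eq :
    Ph * starT Qh + Qh * starT Ph = (2 : ℝ) • (Y * (Q * starT Q - P * starT P) * starT Y) := by
  simpa [starT_eq_transpose_map] using mul_transpose_add_mul_transpose_eq hS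
    (fromCols_map_eq_of_fromCols_eq h (AlgHom.id ℝ ℝ[X]))
    (fromCols_map_eq_of_fromCols_eq h (aeval (-X)))

theorem evalC_mul_conj_add_mul_conj_eq (z : ℂ) :
    evalC Ph z * (evalC Qh ((starRingEnd ℂ) z))ᵀ + evalC Qh z * (evalC Ph ((starRingEnd ℂ) z))ᵀ =
      (2 : ℝ) • (evalC Y z * (evalC Q z * (evalC Q ((starRingEnd ℂ) z))ᵀ -
        evalC P z * (evalC P ((starRingEnd ℂ) z))ᵀ) * (evalC Y z)ᴴ) := by
  rw [← transpose_evalC_conj]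
  exact mul_transpose_add_mul_transpose_eq hS (fromCols_map_eq_of_fromCols_eq h (aeval z))
    (fromCols_map_eq_of_fromCols_eq h (aeval ((starRingEnd ℂ) z)))

theorem posSemidef_boundedReal_iff_posSemidef_posReal (hY : IsUnit Y.det) :
    (∀ z : ℂ, 0 ≤ z.re →
      (evalC Q z * (evalC Q ((starRingEnd ℂ) z))ᵀ -
        evalC P z * (evalC P ((starRingEnd ℂ) z))ᵀ).PosSemidef) ↔
    (∀ z : ℂ, 0 < z.re →
      (evalC Ph z * (evalC Qh ((starRingEnd ℂ) z))ᵀ +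
        evalC Qh z * (evalC Ph ((starRingEnd ℂ) z))ᵀ).PosSemidef) := by
  simp only [evalC_mul_conj_add_mul_conj_eq h hS,
    posSemidef_smul_mul_mul_conjTranspose_iff (isUnit_det_evalC hY _) two_pos]
  refine ⟨fun hle z hz => hle z hz.le, fun hlt z hz => ?_⟩
  refine posSemidef_of_re_nonneg_of_continuous ?_ hlt hz
  exact (continuous_evalC_mul_transpose_evalC_conj Q Q).sub
    (continuous_evalC_mul_transpose_evalC_conj P P)

end Transform

theorem statement14 {n : ℕ} (P Q Phat Qhat : Matrix (Fin n) (Fin n) (Polynomial ℝ))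
    (Y : Matrix (Fin n) (Fin n) (Polynomial ℝ))
    (hY : ∃ c : ℝ, c ≠ 0 ∧ Y.det = Polynomial.C c)
    (S : Matrix (Fin n ⊕ Fin n) (Fin n ⊕ Fin n) ℝ) (hS : IsUnit S.det)
    (hSJS : S * ((1 / 2 : ℝ) • Matrix.fromBlocks (0 : Matrix (Fin n) (Fin n) ℝ) 1 1 0) * Sᵀ =
      Matrix.fromBlocks 1 0 0 (-1))
    (hPQ : Matrix.fromCols Phat (-Qhat) =
      Y * Matrix.fromCols P (-Q) * S.map Polynomial.C) :
    BoundedRealPair P Q ↔ PosRealPair Phat Qhat := by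
  obtain ⟨c, hc, hdet⟩ := hY
  have hYu : IsUnit Y.det := hdet ▸ isUnit_C.2 hc.isUnit
  rw [← algebraMap_eq] at hPQ
  have hker := kernelCondition_smul_mul_mul_iff (Φ := Q * starT Q - P * starT P)
    (H := Matrix.fromCols P (-Q)) hYu (isUnit_det_starT hYu)
    (isUnit_det_map (algebraMap ℝ ℝ[X]) hS) two_ne_zero
  rw [← mul_starT_add_mul_starT_eq hPQ hSJS, ← hPQ] at hker
  simp only [KernelCondition, evalC_fromCols_neg] at hker
  exact and_congr (posSemidef_boundedReal_iff_posSemidef_posReal hPQ hSJS hYu)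
    (and_congr (forall₂_congr fun z _ => by rw [rank_fromCols_evalC_eq hPQ hYu hS]) hker.symm)
end
end

section
/- Let P, Q ∈ ℝ^{n×n}[ξ] with Q nonsingular (det Q ≠ 0) and Q⁻¹P proper. Then there exists a signature matrix Σ ∈ ℝ^{n×n} (a diagonal matrix whose diagonal entries are each 1 or −1) such that Q̂ := ½(Q − PΣ) is nonsingular and Q̂⁻¹P̂ is proper, where P̂ := ½(PΣ + Q). -/
open MeasureTheory Matrix Polynomial
open scoped ComplexOrder

noncomputable section

/-- a signature matrix: diagonal with diagonal entries `±1` -/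
def IsSignature {n : ℕ} (S : Matrix (Fin n) (Fin n) ℝ) : Prop :=
  (∀ i j, i ≠ j → S i j = 0) ∧ ∀ i, S i i = 1 ∨ S i i = -1

/-!
The proper rational functions form the valuation ring `𝒪` of the place at infinity of `ℝ(ξ)`:
a local ring in which `2` is a unit, and `G := Q⁻¹P` is a matrix over it. Writing
`Q̂ = ½Q(I − GΣ)` and `P̂ = ½Q(I + GΣ)`, it suffices to choose `Σ` with `det(I − GΣ)` a unit
of `𝒪`, for then `Q̂⁻¹P̂ = (I − GΣ)⁻¹(I + GΣ)` has entries in `𝒪`. Now `det(I − G diag t)` is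
affine in each `tᵢ`, so its values at `tᵢ = 1` and `tᵢ = −1` add up to twice its value at
`tᵢ = 0`; in a local ring one of two elements with a unit sum is a unit. Starting from `t = 0`,
where the determinant is `1`, the signs can therefore be fixed one coordinate at a time.
-/

namespace Matrix

section Signs

variable {R n : Type*} [CommRing R] [Fintype n] [DecidableEq n]

theorem det_one_sub_mul_diagonal_update (D : Matrix n n R) (t : n → R) (i : n) (hti : t i = 0)
    (s : R) :
    (1 - D * diagonal (Function.update t i s)).det =
      (1 - D * diagonal t).det + s * ((1 - D * diagonal t).updateCol i fun r => -D r i).det := by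
  have hcol : 1 - D * diagonal (Function.update t i s) = (1 - D * diagonal t).updateCol i
      ((fun r => (1 - D * diagonal t) r i) + s • fun r => -D r i) := by
    ext r j
    by_cases hj : j = i
    · subst hj
      simp only [sub_apply, mul_diagonal, Function.update_self, hti, mul_zero, sub_zero,
        updateCol_self, Pi.add_apply, Pi.smul_apply, smul_eq_mul, mul_neg]
      ring
    · simp [hj, mul_diagonal]
  rw [hcol, det_updateCol_add, det_updateCol_smul, updateCol_eq_self]

theorem exists_signs_isUnit_det_one_sub_mul_diagonal [IsLocalRing R] (h2 : IsUnit (2 : R))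
    (D : Matrix n n R) :
    ∃ σ : n → ℤˣ, IsUnit (1 - D * diagonal fun i => ((σ i : ℤ) : R)).det := by
  suffices h : ∀ s : Finset n, ∃ σ : n → ℤˣ,
      IsUnit (1 - D * diagonal fun i => if i ∈ s then ((σ i : ℤ) : R) else 0).det by
    simpa using h Finset.univ
  intro s
  induction s using Finset.induction_on with
  | empty => exact ⟨1, by simp⟩
  | insert a s has ih =>
    obtain ⟨σ, hσ⟩ := ih
    set t : n → R := fun i => if i ∈ s then ((σ i : ℤ) : R) else 0
    have hta : t a = 0 := by simp [t, has]
    have hupdate : ∀ u : ℤˣ, (fun i => if i ∈ insert a s then ((Function.update σ a u i : ℤ) : R)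
        else 0) = Function.update t a ((u : ℤ) : R) := by
      intro u
      funext i
      by_cases hi : i = a
      · subst hi; simp
      · simp [hi, t]
    have hsum : (1 - D * diagonal (Function.update t a 1)).det +
        (1 - D * diagonal (Function.update t a (-1))).det = 2 * (1 - D * diagonal t).det := by
      rw [det_one_sub_mul_diagonal_update D t a hta, det_one_sub_mul_diagonal_update D t a hta]
      ring
    rcases IsLocalRing.isUnit_or_isUnit_of_isUnit_add (hsum ▸ h2.mul hσ) with h | h
    · exact ⟨Function.update σ a 1, by rw [hupdate]; simpa using h⟩
    · exact ⟨Function.update σ a (-1), by rw [hupdate]; simpa using h⟩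

end Signs

theorem smul_inv_mul_smul {K n : Type*} [Field K] [Fintype n] [DecidableEq n] {c : K}
    (hc : c ≠ 0) (A B : Matrix n n K) : (c • A)⁻¹ * (c • B) = A⁻¹ * B := by
  have hcu : IsUnit (diagonal fun _ : n => c).det := by simp [isUnit_iff_ne_zero, hc]
  rw [smul_eq_diagonal_mul, smul_eq_diagonal_mul, Matrix.mul_inv_rev, mul_assoc,
    nonsing_inv_mul_cancel_left _ _ hcu]

theorem map_nonsing_inv {R S n : Type*} [CommRing R] [CommRing S] [Fintype n] [DecidableEq n]
    (f : R →+* S) {M : Matrix n n R} (hM : IsUnit M.det) : (M.map f)⁻¹ = M⁻¹.map f := by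
  refine inv_eq_left_inv ?_
  rw [← RingHom.mapMatrix_apply, ← RingHom.mapMatrix_apply, ← map_mul, nonsing_inv_mul _ hM,
    map_one]

theorem exists_signs_det_ne_zero_inv_mul_eq_map {R K n : Type*} [CommRing R] [IsLocalRing R]
    [Field K] [Fintype n] [DecidableEq n] (φ : R →+* K) (h2 : IsUnit (2 : R))
    (Q P : Matrix n n K) (hQ : Q.det ≠ 0) (G : Matrix n n R) (hG : Q⁻¹ * P = G.map φ) :
    ∃ σ : n → ℤˣ, (Q - P * diagonal fun i => ((σ i : ℤ) : K)).det ≠ 0 ∧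
      ∃ N : Matrix n n R, (Q - P * diagonal fun i => ((σ i : ℤ) : K))⁻¹ *
        (P * diagonal (fun i => ((σ i : ℤ) : K)) + Q) = N.map φ := by
  obtain ⟨σ, hσ⟩ := exists_signs_isUnit_det_one_sub_mul_diagonal h2 G
  set E : Matrix n n R := diagonal fun i => ((σ i : ℤ) : R)
  have hE : E.map φ = diagonal fun i => ((σ i : ℤ) : K) := by simp [E, diagonal_map]
  have hQu : IsUnit Q.det := isUnit_iff_ne_zero.2 hQ
  have hP : P = Q * G.map φ := by rw [← hG, mul_nonsing_inv_cancel_left _ _ hQu]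
  have hsub : Q - P * E.map φ = Q * (1 - G * E).map φ := by
    simp only [hP, ← RingHom.mapMatrix_apply, map_sub, map_one, map_mul, mul_sub, mul_one,
      mul_assoc]
  have hadd : P * E.map φ + Q = Q * (1 + G * E).map φ := by
    simp only [hP, ← RingHom.mapMatrix_apply, map_add, map_one, map_mul, mul_add, mul_one,
      mul_assoc, add_comm]
  have hσK : IsUnit ((1 - G * E).map φ).det := by
    rw [← RingHom.mapMatrix_apply, ← RingHom.map_det]
    exact hσ.map φ
  refine ⟨σ, ?_, (1 - G * E)⁻¹ * (1 + G * E), ?_⟩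
  · rw [← hE, hsub, det_mul]
    exact mul_ne_zero hQ hσK.ne_zero
  · rw [← hE, hsub, hadd, Matrix.mul_inv_rev, mul_assoc, nonsing_inv_mul_cancel_left _ _ hQu,
      map_nonsing_inv φ hσ, ← RingHom.mapMatrix_apply, ← RingHom.mapMatrix_apply,
      ← RingHom.mapMatrix_apply, map_mul]

end Matrix

open scoped Classical in
def properSubring : ValuationSubring (RatFunc ℝ) := (RatFunc.inftyValuation ℝ).valuationSubring

open scoped Classical in
theorem ratProper_iff_mem_properSubring (f : RatFunc ℝ) : ratProper f ↔ f ∈ properSubring := by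
  rcases eq_or_ne f 0 with rfl | hf
  · simp [ratProper]
  rw [ratProper, properSubring, Valuation.mem_valuationSubring_iff, RatFunc.inftyValuation_apply,
    RatFunc.inftyValuation_of_nonzero ℝ hf, ← WithZero.exp_zero, WithZero.exp_le_exp,
    RatFunc.intDegree, sub_nonpos, Nat.cast_le, degree_eq_natDegree (RatFunc.num_ne_zero hf),
    degree_eq_natDegree f.denom_ne_zero, Nat.cast_le]

theorem isUnit_two_properSubring : IsUnit (2 : properSubring) := by
  classical
  have h : algebraMap ℝ (RatFunc ℝ) 2⁻¹ ∈ properSubring :=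
    (Valuation.mem_valuationSubring_iff _ _).2 <|
      Valuation.IsTrivialOn.valuation_algebraMap_le_one _ _
  refine IsUnit.of_mul_eq_one ⟨_, h⟩ (Subtype.ext ?_)
  change (2 : RatFunc ℝ) * algebraMap ℝ _ 2⁻¹ = 1
  rw [map_inv₀, map_ofNat, mul_inv_cancel₀ two_ne_zero]

theorem ratM_eq_mapMatrix {m : Type*} [Fintype m] [DecidableEq m] (M : Matrix m m ℝ[X]) :
    ratM M = (IsScalarTower.toAlgHom ℝ ℝ[X] (RatFunc ℝ)).mapMatrix M :=
  rfl

theorem det_ratM {m : Type*} [Fintype m] [DecidableEq m] (M : Matrix m m ℝ[X]) :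
    (ratM M).det = algebraMap ℝ[X] (RatFunc ℝ) M.det :=
  (RingHom.map_det _ M).symm

theorem ratM_map_C_diagonal_intCast {m : Type*} [DecidableEq m] (d : m → ℤ) :
    ratM ((diagonal fun i => (d i : ℝ)).map C) = diagonal fun i => (d i : RatFunc ℝ) := by
  simp [ratM, diagonal_map]

theorem isSignature_diagonal_units {n : ℕ} (σ : Fin n → ℤˣ) :
    IsSignature (diagonal fun i => ((σ i : ℤ) : ℝ)) := by
  refine ⟨fun i j hij => diagonal_apply_ne _ hij, fun i => ?_⟩
  rcases Int.units_eq_one_or (σ i) with h | h <;> simp [h]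

theorem statement16 {n : ℕ} (P Q : Matrix (Fin n) (Fin n) (Polynomial ℝ))
    (hQ : Q.det ≠ 0) (hprop : ProperM ((ratM Q)⁻¹ * ratM P)) :
    ∃ Sg : Matrix (Fin n) (Fin n) ℝ, IsSignature Sg ∧
      ((1 / 2 : ℝ) • (Q - P * Sg.map Polynomial.C)).det ≠ 0 ∧
      ProperM ((ratM ((1 / 2 : ℝ) • (Q - P * Sg.map Polynomial.C)))⁻¹ *
        ratM ((1 / 2 : ℝ) • (P * Sg.map Polynomial.C + Q))) := by
  obtain ⟨σ, hdet, N, hN⟩ := exists_signs_det_ne_zero_inv_mul_eq_map properSubring.subtype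
    isUnit_two_properSubring (ratM Q) (ratM P) (det_ratM Q ▸ RatFunc.algebraMap_ne_zero hQ)
    (of fun i j => ⟨_, (ratProper_iff_mem_properSubring _).1 (hprop i j)⟩) rfl
  set Sg : Matrix (Fin n) (Fin n) ℝ := diagonal fun i => ((σ i : ℤ) : ℝ)
  set c := algebraMap ℝ (RatFunc ℝ) (1 / 2)
  have hc : c ≠ 0 := by simp [c]
  have hS : ratM (Sg.map C) = diagonal fun i => ((σ i : ℤ) : RatFunc ℝ) :=
    ratM_map_C_diagonal_intCast _
  have hsub : ratM ((1 / 2 : ℝ) • (Q - P * Sg.map C)) =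
      c • (ratM Q - ratM P * diagonal fun i => ((σ i : ℤ) : RatFunc ℝ)) := by
    simp only [← hS, c, ratM_eq_mapMatrix, map_smul, map_sub, map_mul, algebraMap_smul]
  have hadd : ratM ((1 / 2 : ℝ) • (P * Sg.map C + Q)) =
      c • (ratM P * (diagonal fun i => ((σ i : ℤ) : RatFunc ℝ)) + ratM Q) := by
    simp only [← hS, c, ratM_eq_mapMatrix, map_smul, map_add, map_mul, algebraMap_smul]
  refine ⟨Sg, isSignature_diagonal_units σ, ?_, ?_⟩
  · rw [← (RatFunc.algebraMap_injective ℝ).ne_iff, map_zero, ← det_ratM, hsub, det_smul]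
    exact mul_ne_zero (pow_ne_zero _ hc) hdet
  · rw [hsub, hadd, smul_inv_mul_smul hc, hN]
    exact fun i j => (ratProper_iff_mem_properSubring _).2 (N i j).2

end
end

section
/- Suppose m = n. Let X ∈ ℝ^{d×d} be symmetric with X ⪰ 0 and Ω(X) ⪰ 0, and suppose z ∈ ℂ^d and λ ∈ ℂ with Re λ ≤ 0 satisfy zᵀ(λI − A) = 0 and zᵀB = 0. Let X̂ := z·z̄ᵀ + z̄·zᵀ, where z̄ denotes the entrywise complex conjugate (so X̂ is a real symmetric positive-semidefinite matrix). Then for every α > 0, X + αX̂ ⪰ 0 and Ω(X + αX̂) = Ω(X) − α(λ + conj λ)·diag(X̂, 0) ⪰ 0. In particular, if z ≠ 0, then the set of symmetric matrices X ∈ ℝ^{d×d} with X ⪰ 0 and Ω(X) ⪰ 0 has no upper bound: there is no symmetric X₊ with X ≤ X₊ for all such X. -/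
open MeasureTheory Matrix Polynomial
open scoped ComplexOrder

noncomputable section

/-- the LMI matrix of the positive-real lemma -/
def Omega {d n : ℕ} (A : Mat d d) (B : Mat d n) (C : Mat n d) (D : Mat n n)
    (X : Mat d d) : Matrix (Fin d ⊕ Fin n) (Fin d ⊕ Fin n) ℝ :=
  Matrix.fromBlocks (-(Aᵀ * X) - X * A) (Cᵀ - X * B) (C - Bᵀ * X) (D + Dᵀ)

/-- the real symmetric matrix `z z̄ᵀ + z̄ zᵀ` associated with `z ∈ ℂ^d` -/
def outerSym {d : ℕ} (z : Fin d → ℂ) : Mat d d :=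
  Matrix.of fun i j => (z i * (starRingEnd ℂ) (z j) + (starRingEnd ℂ) (z i) * z j).re

/-!
If `zᵀ A = λ zᵀ` and `zᵀ B = 0`, then `X̂ = z z̄ᵀ + z̄ zᵀ` satisfies
`Aᵀ X̂ + X̂ A = 2 Re λ · X̂` and `X̂ B = 0`, so replacing `X` by `X + α X̂` changes `Ω` only in its
upper-left block, by `-2α Re λ · X̂ ⪰ 0`. Thus the whole ray `X + α X̂` consists of solutions,
and as `X̂` has the positive diagonal entry `2 |z i|²` wherever `z i ≠ 0`, no single matrix
dominates the ray.
-/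

theorem Matrix.PosSemidef.fromBlocks_zero {m n R : Type*} [Fintype m] [Fintype n] [DecidableEq m]
    [CommRing R] [PartialOrder R] [StarRing R] {P : Matrix m m R} (hP : P.PosSemidef) :
    (fromBlocks P 0 0 (0 : Matrix n n R)).PosSemidef := by
  rw [← fromCols_fromRows_eq_fromBlocks, fromRows_zero]
  simpa [conjTranspose_fromCols_eq_fromRows_conjTranspose, fromRows_mul, mul_fromCols] using
    hP.conjTranspose_mul_mul_same (fromCols (1 : Matrix m m R) (0 : Matrix m n R))

theorem Matrix.not_forall_posSemidef_sub_smul {ι 𝕜 : Type*} [Fintype ι] [Field 𝕜] [LinearOrder 𝕜]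
    [IsStrictOrderedRing 𝕜] [StarRing 𝕜] (Y : Matrix ι ι 𝕜) {P : Matrix ι ι 𝕜} {i : ι}
    (hi : 0 < P i i) : ¬ ∀ α : 𝕜, 0 < α → (Y - α • P).PosSemidef := by
  intro h
  have hα : 0 < (|Y i i| + 1) / P i i := by positivity
  have := (h _ hα).diag_nonneg (i := i)
  rw [sub_apply, smul_apply, smul_eq_mul, div_mul_cancel₀ _ hi.ne'] at this
  linarith [le_abs_self (Y i i)]

section outerSym

variable {d : ℕ} (z : Fin d → ℂ)

lemma outerSym_eq_smul_add_vecMulVec :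
    outerSym z = (2 : ℝ) • (vecMulVec (Complex.re ∘ z) (Complex.re ∘ z) +
      vecMulVec (Complex.im ∘ z) (Complex.im ∘ z)) := by
  ext i j
  simp only [outerSym, of_apply, Matrix.smul_apply, Matrix.add_apply, vecMulVec_apply,
    Function.comp_apply, smul_eq_mul, Complex.add_re, Complex.mul_re, Complex.conj_re,
    Complex.conj_im]
  ring

lemma outerSym_apply_self (i : Fin d) : outerSym z i i = 2 * Complex.normSq (z i) := by
  simp [outerSym_eq_smul_add_vecMulVec, vecMulVec_apply, Complex.normSq_apply]

lemma outerSym_isSymm : (outerSym z).IsSymm := by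
  simp [outerSym_eq_smul_add_vecMulVec, IsSymm, transpose_vecMulVec]

lemma outerSym_posSemidef : (outerSym z).PosSemidef := by
  rw [outerSym_eq_smul_add_vecMulVec]
  refine PosSemidef.smul ?_ zero_le_two
  simpa using (posSemidef_vecMulVec_self_star (Complex.re ∘ z)).add
    (posSemidef_vecMulVec_self_star (Complex.im ∘ z))

-- Products with real matrices are computed over `ℂ`, where `X̂` splits as `z zᴴ + z̄ zᵀ`.
lemma outerSym_map_ofReal :
    (outerSym z).map (algebraMap ℝ ℂ) = vecMulVec z (star z) + vecMulVec (star z) z := by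
  ext i j
  simp only [outerSym, map_apply, of_apply, Matrix.add_apply, vecMulVec_apply, Pi.star_apply,
    Complex.coe_algebraMap, Complex.star_def]
  refine Complex.conj_eq_iff_re.mp ?_
  simp only [map_add, map_mul, Complex.conj_conj]
  ring

lemma outerSym_mul_map_ofReal {ι : Type*} (M : Matrix (Fin d) ι ℝ) :
    (outerSym z * M).map (algebraMap ℝ ℂ) =
      vecMulVec z (star (z ᵥ* M.map (algebraMap ℝ ℂ))) +
        vecMulVec (star z) (z ᵥ* M.map (algebraMap ℝ ℂ)) := by
  have hstar : star z ᵥ* M.map (algebraMap ℝ ℂ) = star (z ᵥ* M.map (algebraMap ℝ ℂ)) := by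
    ext j
    simp [vecMul, dotProduct]
  rw [Matrix.map_mul, outerSym_map_ofReal, Matrix.add_mul, vecMulVec_mul, vecMulVec_mul, hstar]

lemma outerSym_mul_eq_zero {ι : Type*} {M : Matrix (Fin d) ι ℝ}
    (hM : z ᵥ* M.map (algebraMap ℝ ℂ) = 0) : outerSym z * M = 0 := by
  apply map_injective (algebraMap ℝ ℂ).injective
  dsimp only
  rw [outerSym_mul_map_ofReal, hM]
  ext
  simp [vecMulVec_apply]

lemma transpose_mul_outerSym_add_outerSym_mul {M : Matrix (Fin d) (Fin d) ℝ} {μ : ℂ}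
    (hM : z ᵥ* M.map (algebraMap ℝ ℂ) = μ • z) :
    Mᵀ * outerSym z + outerSym z * M = (2 * μ.re) • outerSym z := by
  have hT : Mᵀ * outerSym z = (outerSym z * M)ᵀ := by rw [transpose_mul, (outerSym_isSymm z).eq]
  apply map_injective (algebraMap ℝ ℂ).injective
  dsimp only
  rw [hT, Matrix.map_add _ (map_add _), transpose_map, outerSym_mul_map_ofReal, hM,
    Matrix.map_smulₛₗ _ (algebraMap ℝ ℂ) _ (by simp), outerSym_map_ofReal]
  simp only [star_smul, transpose_add, transpose_smul, transpose_vecMulVec, vecMulVec_smul,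
    Complex.coe_algebraMap, ← Complex.add_conj, Complex.star_def]
  module

end outerSym

theorem Omega_add_smul {d n : ℕ} (A : Mat d d) (B : Mat d n) (C : Mat n d) (D : Mat n n)
    (X : Mat d d) {P : Mat d d} (hP : P.IsSymm) {c : ℝ} (hA : Aᵀ * P + P * A = c • P)
    (hB : P * B = 0) (α : ℝ) :
    Omega A B C D (X + α • P) = Omega A B C D X - (α * c) • fromBlocks P 0 0 (0 : Mat n n) := by
  have hB' : Bᵀ * P = 0 := by rw [← hP.eq, ← transpose_mul, hB, transpose_zero]
  simp only [Omega, fromBlocks_smul, smul_zero, sub_eq_add_neg, fromBlocks_neg, fromBlocks_add,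
    neg_zero, add_zero]
  congr 1
  · rw [mul_smul, ← hA]
    simp only [Matrix.mul_add, Matrix.add_mul, Matrix.mul_smul, Matrix.smul_mul, smul_add]
    abel
  · simp [Matrix.add_mul, hB]
  · simp [Matrix.mul_add, hB']

/-- unboundedness of the solution set of the LMI. -/
theorem statement18 {d n : ℕ} (A : Mat d d) (B : Mat d n) (C : Mat n d) (D : Mat n n)
    (X : Mat d d) (hsym : X.IsSymm) (hX : X.PosSemidef) (hΩ : (Omega A B C D X).PosSemidef)
    (z : Fin d → ℂ) (lam : ℂ) (hlam : lam.re ≤ 0)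
    (h1 : Matrix.vecMul z (lam • (1 : Matrix (Fin d) (Fin d) ℂ) - A.map (algebraMap ℝ ℂ)) = 0)
    (h2 : Matrix.vecMul z (B.map (algebraMap ℝ ℂ)) = 0) :
    (outerSym z).PosSemidef ∧
    (∀ α : ℝ, 0 < α →
      (X + α • outerSym z).PosSemidef ∧
      Omega A B C D (X + α • outerSym z) =
        Omega A B C D X -
          (α * (lam + (starRingEnd ℂ) lam).re) •
            Matrix.fromBlocks (outerSym z) 0 0 (0 : Mat n n) ∧
      (Omega A B C D (X + α • outerSym z)).PosSemidef) ∧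
    (z ≠ 0 →
      ¬ ∃ Xp : Mat d d, Xp.IsSymm ∧
        ∀ X' : Mat d d, X'.IsSymm → X'.PosSemidef → (Omega A B C D X').PosSemidef →
          (Xp - X').PosSemidef) := by
  have hA : z ᵥ* A.map (algebraMap ℝ ℂ) = lam • z := by
    rwa [vecMul_sub, vecMul_smul, vecMul_one, sub_eq_zero, eq_comm] at h1
  have hre : (lam + (starRingEnd ℂ) lam).re = 2 * lam.re := by simp [Complex.add_conj]
  have hP := outerSym_posSemidef z
  have hΩα (α : ℝ) : Omega A B C D (X + α • outerSym z) = Omega A B C D X -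
      (α * (lam + (starRingEnd ℂ) lam).re) • fromBlocks (outerSym z) 0 0 (0 : Mat n n) := by
    rw [hre]
    exact Omega_add_smul A B C D X (outerSym_isSymm z)
      (transpose_mul_outerSym_add_outerSym_mul z hA) (outerSym_mul_eq_zero z h2) α
  have hsol (α : ℝ) (hα : 0 < α) :
      (X + α • outerSym z).PosSemidef ∧ (Omega A B C D (X + α • outerSym z)).PosSemidef := by
    refine ⟨hX.add (hP.smul hα.le), ?_⟩
    rw [hΩα, sub_eq_add_neg, ← neg_smul]
    exact hΩ.add (hP.fromBlocks_zero.smul (by rw [hre]; nlinarith))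
  refine ⟨hP, fun α hα => ⟨(hsol α hα).1, hΩα α, (hsol α hα).2⟩, ?_⟩
  rintro hz ⟨Xp, -, hXp⟩
  obtain ⟨i, hi⟩ := Function.ne_iff.mp hz
  refine not_forall_posSemidef_sub_smul (Xp - X) (P := outerSym z) (i := i) ?_ fun α hα => ?_
  · rw [outerSym_apply_self]
    exact mul_pos two_pos (Complex.normSq_pos.mpr hi)
  · rw [sub_sub]
    exact hXp _ (hsym.add ((outerSym_isSymm z).smul α)) (hsol α hα).1 (hsol α hα).2

end
end

section
/- Let A ∈ ℝ^{d×d} and C ∈ ℝ^{m×d}, and let X ∈ ℝ^{d×d} be symmetric with X ⪰ 0 and −AᵀX − XA − CᵀC ⪰ 0. Then: (i) for every λ ∈ ℂ with Re λ ≥ 0 and every z ∈ ℂ^d with Az = λz, one has Cz = 0; and (ii) if, in addition, the observability matrix V_o := col(C, CA, …, CA^{d−1}) has rank d, then every eigenvalue of A has real part < 0. -/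
open MeasureTheory Matrix Polynomial
open scoped ComplexOrder

noncomputable section

/-!
Testing the Lyapunov inequality against an eigenvector `A z = λ z` gives
`0 ≤ z* (-AᴴX - XA - CᴴC) z = -2 Re λ · z* X z - ‖C z‖²`; as `z* X z ≥ 0`, `Re λ ≥ 0` forces
`C z = 0`. Then `C Aᵏ z = λᵏ C z = 0` for every `k`, so `z` lies in the kernel of the
(complexified) observability matrix, which is trivial when that matrix has full column rank.
-/

namespace Matrix

variable {𝕜 : Type*} [RCLike 𝕜] {m n : Type*}

lemma mulVec_pow_eq_pow_smul {R : Type*} [CommSemiring R] [Fintype n] [DecidableEq n]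
    {A : Matrix n n R} {μ : R} {z : n → R} (hz : A *ᵥ z = μ • z) (k : ℕ) :
    (A ^ k) *ᵥ z = μ ^ k • z := by
  induction k with
  | zero => simp
  | succ k ih => rw [pow_succ', ← mulVec_mulVec, ih, mulVec_smul, hz, smul_smul, ← pow_succ]

lemma mulVec_injective_of_rank_eq_card {K : Type*} [Field K] [Fintype n] (V : Matrix m n K)
    (h : V.rank = Fintype.card n) : Function.Injective V.mulVec :=
  mulVec_injective_iff.mpr <| linearIndependent_iff_card_eq_finrank_span.mpr <| by
    rw [← h, rank_eq_finrank_span_cols, Set.finrank]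

section Lyapunov

variable [Fintype m] [Fintype n]

lemma star_dotProduct_conjTranspose_mul_mulVec (A B : Matrix m n 𝕜) (z : n → 𝕜) :
    star z ⬝ᵥ (Aᴴ * B) *ᵥ z = star (A *ᵥ z) ⬝ᵥ B *ᵥ z := by
  rw [← mulVec_mulVec, dotProduct_mulVec, vecMul_conjTranspose, star_star]

lemma star_dotProduct_lyapunov_mulVec {A X : Matrix n n 𝕜} (C : Matrix m n 𝕜) {μ : 𝕜}
    {z : n → 𝕜} (hz : A *ᵥ z = μ • z) :
    star z ⬝ᵥ (-(Aᴴ * X) - X * A - Cᴴ * C) *ᵥ z =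
      -(2 * RCLike.re μ) * (star z ⬝ᵥ X *ᵥ z) - star (C *ᵥ z) ⬝ᵥ C *ᵥ z := by
  rw [sub_mulVec, sub_mulVec, neg_mulVec, dotProduct_sub, dotProduct_sub, dotProduct_neg,
    star_dotProduct_conjTranspose_mul_mulVec, star_dotProduct_conjTranspose_mul_mulVec,
    ← mulVec_mulVec, hz, star_smul, mulVec_smul, smul_dotProduct, dotProduct_smul,
    ← RCLike.add_conj, RCLike.star_def, smul_eq_mul, smul_eq_mul]
  ring

lemma mulVec_eq_zero_of_lyapunov {A X : Matrix n n 𝕜} {C : Matrix m n 𝕜} (hX : X.PosSemidef)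
    (hL : (-(Aᴴ * X) - X * A - Cᴴ * C).PosSemidef) {μ : 𝕜} (hμ : 0 ≤ RCLike.re μ)
    {z : n → 𝕜} (hz : A *ᵥ z = μ • z) : C *ᵥ z = 0 := by
  have hL_z := hL.dotProduct_mulVec_nonneg z
  rw [star_dotProduct_lyapunov_mulVec C hz] at hL_z
  have hX_z : 0 ≤ (2 * RCLike.re μ : 𝕜) * (star z ⬝ᵥ X *ᵥ z) :=
    mul_nonneg (by exact_mod_cast (by positivity : (0 : ℝ) ≤ 2 * RCLike.re μ))
      (hX.dotProduct_mulVec_nonneg z)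
  have hCz : star (C *ᵥ z) ⬝ᵥ C *ᵥ z ≤ 0 := by linear_combination hL_z + hX_z
  exact dotProduct_star_self_eq_zero.mp (le_antisymm hCz (dotProduct_star_self_nonneg _))

end Lyapunov

lemma conjTranspose_map_algebraMap (B : Matrix m n ℝ) :
    (B.map (algebraMap ℝ 𝕜))ᴴ = Bᵀ.map (algebraMap ℝ 𝕜) := by
  rw [← conjTranspose_eq_transpose_of_trivial, conjTranspose_map]
  intro x
  simp

lemma PosSemidef.map_algebraMap [Fintype n] {M : Matrix n n ℝ} (hM : M.PosSemidef) :
    (M.map (algebraMap ℝ 𝕜)).PosSemidef := by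
  classical
  open scoped MatrixOrder in
  obtain ⟨B, rfl⟩ := CStarAlgebra.nonneg_iff_eq_star_mul_self.mp hM.nonneg
  rw [star_eq_conjTranspose, conjTranspose_eq_transpose_of_trivial, Matrix.map_mul,
    ← conjTranspose_map_algebraMap]
  exact posSemidef_conjTranspose_mul_self _

lemma map_algebraMap_lyapunov [Fintype m] [Fintype n] (A X : Matrix n n ℝ) (C : Matrix m n ℝ) :
    (-(Aᵀ * X) - X * A - Cᵀ * C).map (algebraMap ℝ 𝕜) =
      -((A.map (algebraMap ℝ 𝕜))ᴴ * X.map (algebraMap ℝ 𝕜)) -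
        X.map (algebraMap ℝ 𝕜) * A.map (algebraMap ℝ 𝕜) -
        (C.map (algebraMap ℝ 𝕜))ᴴ * C.map (algebraMap ℝ 𝕜) := by
  rw [Matrix.map_sub _ (map_sub _), Matrix.map_sub _ (map_sub _), Matrix.map_neg _ (map_neg _)]
  simp only [Matrix.map_mul, conjTranspose_map_algebraMap]

lemma map_algebraMap_mulVec_eq_zero_of_lyapunov [Fintype m] [Fintype n] {A X : Matrix n n ℝ}
    {C : Matrix m n ℝ} (hX : X.PosSemidef) (hL : (-(Aᵀ * X) - X * A - Cᵀ * C).PosSemidef)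
    {μ : 𝕜} (hμ : 0 ≤ RCLike.re μ) {z : n → 𝕜} (hz : A.map (algebraMap ℝ 𝕜) *ᵥ z = μ • z) :
    C.map (algebraMap ℝ 𝕜) *ᵥ z = 0 :=
  mulVec_eq_zero_of_lyapunov hX.map_algebraMap
    (map_algebraMap_lyapunov (𝕜 := 𝕜) A X C ▸ hL.map_algebraMap) hμ hz

lemma re_map_algebraMap_mulVec [Fintype n] (V : Matrix m n ℝ) (z : n → 𝕜) (i : m) :
    RCLike.re ((V.map (algebraMap ℝ 𝕜) *ᵥ z) i) = (V *ᵥ fun j => RCLike.re (z j)) i := by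
  simp [mulVec, dotProduct]

lemma im_map_algebraMap_mulVec [Fintype n] (V : Matrix m n ℝ) (z : n → 𝕜) (i : m) :
    RCLike.im ((V.map (algebraMap ℝ 𝕜) *ᵥ z) i) = (V *ᵥ fun j => RCLike.im (z j)) i := by
  simp [mulVec, dotProduct]

lemma eq_zero_of_map_algebraMap_mulVec_eq_zero [Fintype n] {V : Matrix m n ℝ}
    (hV : Function.Injective V.mulVec) {z : n → 𝕜} (hz : V.map (algebraMap ℝ 𝕜) *ᵥ z = 0) :
    z = 0 := by
  have hre : (V *ᵥ fun j => RCLike.re (z j)) = V *ᵥ 0 := by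
    ext i; simp [← re_map_algebraMap_mulVec, hz]
  have him : (V *ᵥ fun j => RCLike.im (z j)) = V *ᵥ 0 := by
    ext i; simp [← im_map_algebraMap_mulVec, hz]
  ext j
  apply RCLike.ext
  · simpa using congrFun (hV hre) j
  · simpa using congrFun (hV him) j

end Matrix

lemma obsMat_map_algebraMap_mulVec_eq_zero {𝕜 : Type*} [RCLike 𝕜] {d m : ℕ} {A : Mat d d}
    {C : Matrix (Fin m) (Fin d) ℝ} {μ : 𝕜} {z : Fin d → 𝕜}
    (hz : A.map (algebraMap ℝ 𝕜) *ᵥ z = μ • z) (hC : C.map (algebraMap ℝ 𝕜) *ᵥ z = 0) :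
    (obsMat A C).map (algebraMap ℝ 𝕜) *ᵥ z = 0 := by
  ext ⟨k, i⟩
  have hrow : ((obsMat A C).map (algebraMap ℝ 𝕜) *ᵥ z) (k, i) =
      (C.map (algebraMap ℝ 𝕜) *ᵥ ((A.map (algebraMap ℝ 𝕜)) ^ (k : ℕ) *ᵥ z)) i := by
    rw [mulVec_mulVec, ← Matrix.map_pow, ← Matrix.map_mul]
    rfl
  rw [hrow, mulVec_pow_eq_pow_smul hz, mulVec_smul, hC, smul_zero]
  rfl

theorem statement19_general {d m : ℕ} (A : Mat d d) (C : Matrix (Fin m) (Fin d) ℝ)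
    (X : Mat d d) (hX : X.PosSemidef)
    (hlyap : (-(Aᵀ * X) - X * A - Cᵀ * C).PosSemidef) :
    (∀ lam : ℂ, 0 ≤ lam.re → ∀ z : Fin d → ℂ,
      A.map (algebraMap ℝ ℂ) *ᵥ z = lam • z → C.map (algebraMap ℝ ℂ) *ᵥ z = 0) ∧
    ((obsMat A C).rank = d →
      ∀ (lam : ℂ) (z : Fin d → ℂ), z ≠ 0 →
        A.map (algebraMap ℝ ℂ) *ᵥ z = lam • z → lam.re < 0) := by
  have hCz : ∀ lam : ℂ, 0 ≤ lam.re → ∀ z : Fin d → ℂ,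
      A.map (algebraMap ℝ ℂ) *ᵥ z = lam • z → C.map (algebraMap ℝ ℂ) *ᵥ z = 0 :=
    fun _ hlam _ hz => map_algebraMap_mulVec_eq_zero_of_lyapunov hX hlyap hlam hz
  refine ⟨hCz, fun hrank lam z hz0 hz => ?_⟩
  by_contra! hlam
  have hobs : Function.Injective (obsMat A C).mulVec :=
    mulVec_injective_of_rank_eq_card _ (by rw [hrank, Fintype.card_fin])
  exact hz0 (eq_zero_of_map_algebraMap_mulVec_eq_zero hobs
    (obsMat_map_algebraMap_mulVec_eq_zero hz (hCz lam hlam z hz)))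

theorem statement19 {d m : ℕ} (A : Mat d d) (C : Matrix (Fin m) (Fin d) ℝ)
    (X : Mat d d) (hsym : X.IsSymm) (hX : X.PosSemidef)
    (hlyap : (-(Aᵀ * X) - X * A - Cᵀ * C).PosSemidef) :
    (∀ lam : ℂ, 0 ≤ lam.re → ∀ z : Fin d → ℂ,
      A.map (algebraMap ℝ ℂ) *ᵥ z = lam • z → C.map (algebraMap ℝ ℂ) *ᵥ z = 0) ∧
    ((obsMat A C).rank = d →
      ∀ (lam : ℂ) (z : Fin d → ℂ), z ≠ 0 →
        A.map (algebraMap ℝ ℂ) *ᵥ z = lam • z → lam.re < 0) :=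
  statement19_general A C X hX hlyap

end
end
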